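/- arXiv:1507.04477 — 10 statements merged into one kernel-verified Lean document; each statement's English description precedes it below -/
import Mathlib

section
/- There exists a Lebesgue measurable function f : ℝ → ℝ that is everywhere surjective, i.e., f(I) = ℝ for every nondegenerate interval I ⊆ ℝ, and moreover f = 0 almost everywhere. -/
/-!
Enumerate the nonempty members `Uₙ` of a countable base and choose, recursively, pairwise
disjoint closed null uncountable sets `Cₙ ⊆ Uₙ`: there is always room, because removing a
closed null set from a nonempty open set leaves a nonempty open set. By the Borel isomorphism
theorem each `Cₙ` maps onto `ℝ` by a Borel function; gluing these and putting `0` elsewhere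
gives a Borel function that vanishes off the null set `⋃ Cₙ` and maps every nonempty open set
onto `ℝ`. On `ℝ` the sets `Cₙ` are taken to be affine copies of the Cantor set.
-/

open MeasureTheory Set Function
open scoped Pointwise ENNReal

/-- A function `f : ℝ → ℝ` is everywhere surjective if it maps every nonempty
open interval onto all of `ℝ`. -/
def EverywhereSurjective (f : ℝ → ℝ) : Prop :=
  ∀ a b : ℝ, a < b → f '' Set.Ioo a b = Set.univ

theorem Real.volume_image_affine (a r : ℝ) (s : Set ℝ) :
    volume ((fun x => a + r * x) '' s) = ENNReal.ofReal |r| * volume s := by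
  have : (fun x => a + r * x) '' s = (fun x => a + x) '' (r • s) := by
    rw [← image_smul, image_image]; rfl
  rw [this, image_add_left, measure_preimage_add, Measure.addHaar_smul]
  simp

theorem volume_preCantorSet_le (n : ℕ) : volume (preCantorSet n) ≤ (2 / 3 : ℝ≥0∞) ^ n := by
  induction n with
  | zero => simp [Real.volume_Icc]
  | succ n ih =>
    have third (a : ℝ) :
        volume ((fun x => (a + x) / 3) '' preCantorSet n) ≤ 3⁻¹ * (2 / 3) ^ n := by
      have := Real.volume_image_affine (a / 3) 3⁻¹ (preCantorSet n)
      rw [show (fun x => a / 3 + 3⁻¹ * x) = fun x => (a + x) / 3 by funext; ring] at this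
      rw [this, abs_of_pos (by norm_num), ENNReal.ofReal_inv_of_pos (by norm_num),
        ENNReal.ofReal_ofNat]
      gcongr
    calc volume (preCantorSet (n + 1))
        ≤ volume ((fun x => (0 + x) / 3) '' preCantorSet n)
          + volume ((fun x => (2 + x) / 3) '' preCantorSet n) := by
          simpa using measure_union_le _ _
      _ ≤ 3⁻¹ * (2 / 3) ^ n + 3⁻¹ * (2 / 3) ^ n := add_le_add (third 0) (third 2)
      _ = (2 / 3) ^ (n + 1) := by
        rw [← two_mul, ← mul_assoc, pow_succ', ENNReal.div_eq_inv_mul, mul_comm 2]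

theorem volume_cantorSet : volume cantorSet = 0 :=
  le_antisymm (ge_of_tendsto' (ENNReal.tendsto_pow_atTop_nhds_zero_of_lt_one
    (ENNReal.div_lt_of_lt_mul' (by norm_num)))
    fun n => (measure_mono (iInter_subset _ n)).trans (volume_preCantorSet_le n)) bot_le

theorem not_countable_cantorSet : ¬cantorSet.Countable := by
  rw [← countable_coe_iff, cantorSetEquivNatToBool.countable_iff, ← Cardinal.mk_le_aleph0_iff]
  simpa using Cardinal.aleph0_lt_continuum

theorem Real.exists_isClosed_null_not_countable_subset {U : Set ℝ} (hU : IsOpen U)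
    (hne : U.Nonempty) : ∃ C ⊆ U, IsClosed C ∧ volume C = 0 ∧ ¬C.Countable := by
  obtain ⟨x, hx⟩ := hne
  obtain ⟨ε, hε, hball⟩ := Metric.isOpen_iff.1 hU x hx
  have hinj : Injective fun y => x + ε / 2 * y := fun y z h => by
    simpa [hε.ne'] using h
  refine ⟨(fun y => x + ε / 2 * y) '' cantorSet, ?_, ?_, ?_, ?_⟩
  · rintro _ ⟨y, hy, rfl⟩
    obtain ⟨hy0, hy1⟩ := cantorSet_subset_unitInterval hy
    apply hball
    rw [Metric.mem_ball, Real.dist_eq, add_sub_cancel_left, abs_of_nonneg (by positivity)]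
    nlinarith
  · exact (isCompact_cantorSet.image (by fun_prop)).isClosed
  · rw [Real.volume_image_affine, volume_cantorSet, mul_zero]
  · exact fun h => not_countable_cantorSet ((mapsTo_image _ _).countable_of_injOn hinj.injOn h)

theorem exists_pairwise_disjoint_isClosed_null_not_countable {X : Type*} [TopologicalSpace X]
    [MeasurableSpace X] {μ : Measure X} [μ.IsOpenPosMeasure]
    (hX : ∀ U : Set X, IsOpen U → U.Nonempty → ∃ C ⊆ U, IsClosed C ∧ μ C = 0 ∧ ¬C.Countable)
    {U : ℕ → Set X} (hU : ∀ n, IsOpen (U n)) (hne : ∀ n, (U n).Nonempty) :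
    ∃ C : ℕ → Set X, Pairwise (Disjoint on C) ∧
      ∀ n, C n ⊆ U n ∧ IsClosed (C n) ∧ μ (C n) = 0 ∧ ¬(C n).Countable := by
  choose! pick pick_sub pick_closed pick_null pick_uncountable using hX
  -- `S n` is the union of the pieces chosen before stage `n`; the next piece avoids it.
  let S : ℕ → Set X := fun n => Nat.rec ∅ (fun k T => T ∪ pick (U k \ T)) n
  have room (n) (hS : IsClosed (S n) ∧ μ (S n) = 0) :
      IsOpen (U n \ S n) ∧ (U n \ S n).Nonempty :=
    ⟨(hU n).sdiff hS.1, nonempty_of_measure_ne_zero <| by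
      rw [measure_sdiff_null hS.2]; exact (hU n).measure_ne_zero μ (hne n)⟩
  have hS (n) : IsClosed (S n) ∧ μ (S n) = 0 := by
    induction n with
    | zero => exact ⟨isClosed_empty, measure_empty⟩
    | succ n ih =>
      obtain ⟨hopen, hnonempty⟩ := room n ih
      exact ⟨ih.1.union (pick_closed _ hopen hnonempty),
        measure_union_null ih.2 (pick_null _ hopen hnonempty)⟩
  have S_mono : Monotone S := monotone_nat_of_le_succ fun n => subset_union_left
  refine ⟨fun n => pick (U n \ S n), (pairwise_disjoint_on _).2 fun m n hmn => ?_, fun n => ?_⟩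
  · have hsub := pick_sub _ (room n (hS n)).1 (room n (hS n)).2
    exact disjoint_left.2 fun x hxm hxn =>
      (hsub hxn).2 (S_mono (Nat.succ_le_of_lt hmn) (subset_union_right hxm))
  · obtain ⟨hopen, hnonempty⟩ := room n (hS n)
    exact ⟨(pick_sub _ hopen hnonempty).trans sdiff_subset, pick_closed _ hopen hnonempty,
      pick_null _ hopen hnonempty, pick_uncountable _ hopen hnonempty⟩

theorem exists_measurable_image_eq_univ {X Y : Type*} [MeasurableSpace X] [StandardBorelSpace X]
    [MeasurableSpace Y] [StandardBorelSpace Y] [Uncountable Y] {C : Set X}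
    (hC : MeasurableSet C) (hC_uncountable : ¬C.Countable) :
    ∃ g : X → Y, Measurable g ∧ g '' C = univ := by
  classical
  have := hC.standardBorel
  let e : C ≃ᵐ Y :=
    PolishSpace.measurableEquivOfNotCountable (by rwa [countable_coe_iff]) not_countable
  refine ⟨fun x => if hx : x ∈ C then e ⟨x, hx⟩ else Classical.arbitrary Y,
    e.measurable.dite measurable_const hC, eq_univ_of_forall fun y => ?_⟩
  obtain ⟨⟨x, hx⟩, rfl⟩ := e.surjective y
  exact ⟨x, hx, dif_pos hx⟩

theorem exists_measurable_eqOn_of_pairwise_disjoint {α β : Type*} [MeasurableSpace α]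
    [MeasurableSpace β] {C : ℕ → Set α} (hC : Pairwise (Disjoint on C))
    (hCm : ∀ n, MeasurableSet (C n)) {g : ℕ → α → β} (hg : ∀ n, Measurable (g n)) (b : β) :
    ∃ f : α → β, Measurable f ∧ (∀ n, EqOn f (g n) (C n)) ∧ EqOn f (fun _ => b) (⋃ n, C n)ᶜ := by
  classical
  have hfind (x : α) : ∃ n, x ∈ C n ∨ x ∉ ⋃ n, C n := by
    by_cases hx : x ∈ ⋃ n, C n
    · exact (mem_iUnion.1 hx).imp fun _ => Or.inl
    · exact ⟨0, Or.inr hx⟩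
  have hmeas : Measurable fun x => g (Nat.find (hfind x)) x :=
    Measurable.find (p := fun n x => x ∈ C n ∨ x ∉ ⋃ k, C k) hg
      (fun n => (hCm n).union (MeasurableSet.iUnion hCm).compl) hfind
  refine ⟨(⋃ n, C n).piecewise (fun x => g (Nat.find (hfind x)) x) fun _ => b,
    hmeas.piecewise (MeasurableSet.iUnion hCm) measurable_const, fun n x hx => ?_,
    fun x hx => piecewise_eq_of_notMem _ _ _ hx⟩
  have hxU : x ∈ ⋃ n, C n := mem_iUnion_of_mem n hx
  rw [piecewise_eq_of_mem _ _ _ hxU]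
  congr
  rw [Nat.find_eq_iff]
  refine ⟨Or.inl hx, fun m hmn => ?_⟩
  exact not_or.2 ⟨fun hxm => (hC hmn.ne).le_bot ⟨hxm, hx⟩, not_not.2 hxU⟩

theorem exists_measurable_image_open_eq_univ_and_ae_eq_const {X Y : Type*} [TopologicalSpace X]
    [PolishSpace X] [MeasurableSpace X] [BorelSpace X] [MeasurableSpace Y] [StandardBorelSpace Y]
    [Uncountable Y] (μ : Measure X) [μ.IsOpenPosMeasure]
    (hX : ∀ U : Set X, IsOpen U → U.Nonempty → ∃ C ⊆ U, IsClosed C ∧ μ C = 0 ∧ ¬C.Countable)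
    (y₀ : Y) :
    ∃ f : X → Y, Measurable f ∧ (∀ U, IsOpen U → U.Nonempty → f '' U = univ) ∧
      f =ᵐ[μ] fun _ => y₀ := by
  obtain ⟨b, hb_countable, hb_empty, hb⟩ := TopologicalSpace.exists_countable_basis X
  rcases b.eq_empty_or_nonempty with rfl | hb_nonempty
  · refine ⟨fun _ => y₀, measurable_const, fun U hU ⟨x, hx⟩ => ?_, ae_eq_refl _⟩
    obtain ⟨v, hv, -⟩ := hb.exists_subset_of_mem_open hx hU
    exact absurd hv (notMem_empty v)
  obtain ⟨u, rfl⟩ := hb_countable.exists_eq_range hb_nonempty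
  obtain ⟨C, hC_disjoint, hC⟩ := exists_pairwise_disjoint_isClosed_null_not_countable hX
    (fun n => hb.isOpen (mem_range_self n))
    (fun n => nonempty_iff_ne_empty.2 fun h => hb_empty (h ▸ mem_range_self n))
  have hC_meas (n) : MeasurableSet (C n) := (hC n).2.1.measurableSet
  choose g hg_meas hg_image using
    fun n => exists_measurable_image_eq_univ (Y := Y) (hC_meas n) (hC n).2.2.2
  obtain ⟨f, hf_meas, hf_C, hf_compl⟩ :=
    exists_measurable_eqOn_of_pairwise_disjoint hC_disjoint hC_meas hg_meas y₀
  refine ⟨f, hf_meas, fun U hU ⟨x, hx⟩ => ?_, ae_iff.2 ?_⟩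
  · obtain ⟨_, ⟨n, rfl⟩, -, hnU⟩ := hb.exists_subset_of_mem_open hx hU
    rw [← univ_subset_iff, ← hg_image n, ← (hf_C n).image_eq]
    exact image_mono ((hC n).1.trans hnU)
  · exact measure_mono_null (fun x hx => not_not.1 fun h => hx (hf_compl h))
      (measure_iUnion_null fun n => (hC n).2.2.1)

theorem stmt_3 :
    ∃ f : ℝ → ℝ, Measurable f ∧ EverywhereSurjective f ∧ f =ᵐ[volume] 0 := by
  obtain ⟨f, hf_meas, hf_image, hf_ae⟩ := exists_measurable_image_open_eq_univ_and_ae_eq_const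
    volume (fun _ => Real.exists_isClosed_null_not_countable_subset) (0 : ℝ)
  exact ⟨f, hf_meas, fun a b hab => hf_image _ isOpen_Ioo (nonempty_Ioo.2 hab), hf_ae⟩
end

section
/- The set of Lebesgue measurable everywhere surjective functions ℝ → ℝ is 𝔠-lineable: there exists a vector subspace M of ℝ^ℝ of dimension continuum such that every nonzero element of M is Lebesgue measurable and everywhere surjective. -/
open MeasureTheory

/-!
Let `D x` be the upper frequency of the digit `1` in the binary expansion of `x`. Altering
finitely many digits does not change `D`, and every `y ∈ [0, 1)` is the frequency of the
Sturmian sequence `⌊y (j + 1)⌋ - ⌊y j⌋`, which has infinitely many zeros; appending it to the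
first digits of a point of an interval gives a point of that interval with `D = y`. Hence
`φ = logit ∘ D` is Borel and everywhere surjective.

A nonzero combination `h t = ∑ aᵢ sinh (cᵢ t)` with distinct `cᵢ > 0` is odd, and behaves like
`(a₀ / 2) e^{c₀ t}` at `+∞` for the largest `c₀`, so it is surjective. Then `h ∘ φ` is
measurable and everywhere surjective, in particular nonzero; so the functions `sinh (c φ)`,
`c > 0`, are linearly independent and span the required space.
-/

open Filter Topology Set Cardinal Real

universe u

theorem exists_submodule_rank_eq_of_linearCombination_mem {R : Type*} {ι V : Type u}
    [DivisionRing R] [AddCommGroup V] [Module R V] {A : Set V} (h0 : 0 ∉ A) (v : ι → V)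
    (hv : ∀ l : ι →₀ R, l ≠ 0 → Finsupp.linearCombination R v l ∈ A) :
    ∃ M : Submodule R V, Module.rank R M = #ι ∧ ∀ f ∈ M, f ≠ 0 → f ∈ A := by
  have hli : LinearIndependent R v :=
    linearIndependent_iff.2 fun l hl => by_contra fun hne => h0 (hl ▸ hv l hne)
  refine ⟨Submodule.span R (range v), by rw [rank_span hli, mk_range_eq v hli.injective], ?_⟩
  rintro f hf hf0
  rw [← Finsupp.range_linearCombination] at hf
  obtain ⟨l, rfl⟩ := hf
  exact hv l (by rintro rfl; simp at hf0)

theorem EverywhereSurjective.comp {φ : ℝ → ℝ} (hφ : EverywhereSurjective φ) {h : ℝ → ℝ}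
    (hh : Function.Surjective h) : EverywhereSurjective (h ∘ φ) := fun a b hab => by
  rw [image_comp, hφ a b hab, image_univ, hh.range_eq]

theorem not_everywhereSurjective_zero : ¬EverywhereSurjective 0 := fun h => by
  obtain ⟨x, -, hx⟩ := (h 0 1 one_pos).symm ▸ mem_univ (1 : ℝ)
  exact zero_ne_one hx

theorem tendsto_exp_mul_atTop_nhds_zero {k : ℝ} (hk : k < 0) :
    Tendsto (fun t => exp (k * t)) atTop (𝓝 0) :=
  tendsto_exp_comp_nhds_zero.2 (tendsto_id.const_mul_atTop_of_neg hk)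

theorem sinh_mul_mul_exp_neg (c d t : ℝ) :
    sinh (c * t) * exp (-(d * t)) = (exp ((c - d) * t) - exp (-(c + d) * t)) / 2 := by
  rw [sinh_eq, div_mul_eq_mul_div, sub_mul, ← exp_add, ← exp_add]
  ring_nf

theorem tendsto_sinh_mul_mul_exp_neg {c d : ℝ} (h : |c| < d) :
    Tendsto (fun t => sinh (c * t) * exp (-(d * t))) atTop (𝓝 0) := by
  obtain ⟨h₁, h₂⟩ := abs_lt.1 h
  simp_rw [sinh_mul_mul_exp_neg]
  simpa using ((tendsto_exp_mul_atTop_nhds_zero (k := c - d) (by linarith)).sub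
    (tendsto_exp_mul_atTop_nhds_zero (k := -(c + d)) (by linarith))).div_const 2

theorem tendsto_sinh_mul_mul_exp_neg_self {d : ℝ} (hd : 0 < d) :
    Tendsto (fun t => sinh (d * t) * exp (-(d * t))) atTop (𝓝 (1 / 2)) := by
  simp_rw [sinh_mul_mul_exp_neg, sub_self, zero_mul, exp_zero]
  simpa using
    ((tendsto_exp_mul_atTop_nhds_zero (k := -(d + d)) (by linarith)).const_sub 1).div_const 2

theorem Continuous.surjective_of_odd {f : ℝ → ℝ} (hf : Continuous f) (hodd : Function.Odd f)
    (h : Tendsto f atTop atTop ∨ Tendsto f atTop atBot) : Function.Surjective f := by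
  have hf' : f = fun t => -f (-t) := funext fun t => by simp [hodd t]
  rcases h with h | h
  · refine hf.surjective h ?_
    rw [hf']
    exact tendsto_neg_atTop_atBot.comp (h.comp tendsto_neg_atBot_atTop)
  · refine hf.surjective' ?_ h
    rw [hf']
    exact tendsto_neg_atBot_atTop.comp (h.comp tendsto_neg_atBot_atTop)

noncomputable def sinhSum (l : Ioi (0 : ℝ) →₀ ℝ) (t : ℝ) : ℝ :=
  l.sum fun c a => a * sinh (c * t)

namespace sinhSum

variable (l : Ioi (0 : ℝ) →₀ ℝ)

theorem continuous : Continuous (sinhSum l) := by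
  unfold sinhSum Finsupp.sum
  fun_prop

theorem odd : Function.Odd (sinhSum l) := fun t => by
  simp [sinhSum, Finsupp.sum, ← Finset.sum_neg_distrib]

theorem tendsto_mul_exp_neg (hl : l.support.Nonempty) :
    Tendsto (fun t => sinhSum l t * exp (-(l.support.max' hl * t))) atTop
      (𝓝 (l (l.support.max' hl) / 2)) := by
  set c₀ := l.support.max' hl
  have hterm : ∀ c ∈ l.support, Tendsto (fun t => l c * (sinh (c * t) * exp (-(c₀ * t)))) atTop
      (𝓝 (if c = c₀ then l c₀ / 2 else 0)) := by
    intro c hc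
    split_ifs with h
    · rw [h]
      simpa [div_eq_mul_inv] using (tendsto_sinh_mul_mul_exp_neg_self c₀.2).const_mul (l c₀)
    · have hlt : (c : ℝ) < c₀ :=
        lt_of_le_of_ne (l.support.le_max' c hc) (Subtype.coe_ne_coe.2 h)
      simpa using (tendsto_sinh_mul_mul_exp_neg (c := c) (d := c₀)
        (by rw [abs_of_pos c.2]; exact hlt)).const_mul (l c)
  have := tendsto_finsetSum _ hterm
  rw [Finset.sum_ite_eq' _ _, if_pos (l.support.max'_mem hl)] at this
  refine this.congr fun t => ?_
  simp [sinhSum, Finsupp.sum, Finset.sum_mul, mul_assoc]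

theorem surjective (hl : l ≠ 0) : Function.Surjective (sinhSum l) := by
  have hs : l.support.Nonempty := Finsupp.support_nonempty_iff.2 hl
  have hc₀ : l (l.support.max' hs) ≠ 0 := Finsupp.mem_support_iff.1 (l.support.max'_mem hs)
  have hexp : Tendsto (fun t => exp (l.support.max' hs * t)) atTop atTop :=
    tendsto_exp_atTop.comp (tendsto_id.const_mul_atTop (l.support.max' hs).2)
  refine (continuous l).surjective_of_odd (odd l) ?_
  rcases hc₀.lt_or_gt with hneg | hpos
  · right
    exact ((tendsto_mul_exp_neg l hs).neg_mul_atTop (by linarith) hexp).congr fun t => by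
      simp [mul_assoc, ← exp_add]
  · left
    exact ((tendsto_mul_exp_neg l hs).pos_mul_atTop (by linarith) hexp).congr fun t => by
      simp [mul_assoc, ← exp_add]

end sinhSum

theorem linearCombination_sinh_comp (φ : ℝ → ℝ) (l : Ioi (0 : ℝ) →₀ ℝ) :
    Finsupp.linearCombination ℝ (fun c : Ioi (0 : ℝ) => fun x => sinh (c * φ x)) l =
      sinhSum l ∘ φ := by
  ext x
  simp [Finsupp.linearCombination_apply, sinhSum, Finsupp.sum]

/-- `digit b x k` is the `(k + 1)`-st base-`b` digit of `x` after the point. Unlike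
`Real.digits` it is meaningful for all `x`, and it is unchanged by integer translations. -/
noncomputable def digit (b : ℕ) (x : ℝ) (k : ℕ) : ℤ := ⌊x * b ^ (k + 1)⌋ % b

theorem measurable_digit (b k : ℕ) : Measurable fun x => (digit b x k : ℝ) :=
  (measurable_from_top (f := fun z : ℤ => ((z % b : ℤ) : ℝ))).comp
    (Int.measurable_floor.comp (measurable_id.mul_const _))

theorem digit_intCast_add_div_pow {b : ℕ} (hb : b ≠ 0) (m : ℤ) (x : ℝ) (N j : ℕ) :
    digit b ((m + x) / b ^ N) (N + j) = digit b x j := by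
  have : (m + x) / b ^ N * b ^ (N + j + 1) = ((m * b ^ (j + 1) : ℤ) : ℝ) + x * b ^ (j + 1) := by
    push_cast
    rw [add_assoc, pow_add]
    field_simp
  rw [digit, digit, this, Int.floor_intCast_add, pow_succ, ← mul_assoc, add_comm,
    Int.add_mul_emod_self_right]

theorem Real.ofDigits_lt_one {b : ℕ} {a : ℕ → Fin b} {k : ℕ} (hk : (a k : ℕ) + 1 < b) :
    ofDigits a < 1 := by
  have hb : 1 < b := by omega
  rw [← ofDigits_const_last_eq_one' hb]
  refine Summable.tsum_lt_tsum (i := k) (fun i => ?_) ?_ summable_ofDigitsTerm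
    summable_ofDigitsTerm
  · unfold ofDigitsTerm
    gcongr
    exact_mod_cast Nat.le_sub_one_of_lt (a i).2
  · unfold ofDigitsTerm
    gcongr
    exact_mod_cast Nat.lt_sub_of_add_lt hk

theorem digit_ofDigits {b : ℕ} {a : ℕ → Fin b} (ha : ∀ n, ∃ k ≥ n, (a k : ℕ) + 1 < b) (n : ℕ) :
    digit b (ofDigits a) n = a n := by
  have hb : 0 < b := Fin.pos (a 0)
  set r : ℕ → ℝ := fun n => ofDigits fun i => a (i + n)
  have hr : ∀ n, r n ∈ Ico 0 1 := fun n => by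
    obtain ⟨k, hkn, hk⟩ := ha n
    exact ⟨ofDigits_nonneg _, ofDigits_lt_one (k := k - n) (by rwa [Nat.sub_add_cancel hkn])⟩
  have hr_succ : ∀ n, r n * b = a n + r (n + 1) := fun n => by
    have := ofDigits_eq_sum_add_ofDigits (fun i => a (i + n)) 1
    simp only [Finset.range_one, Finset.sum_singleton, ofDigitsTerm, zero_add, pow_one] at this
    simp only [r, this, add_right_comm _ 1 n, add_assoc]
    field_simp
  have hint : ∀ n, ∃ P : ℤ, ofDigits a * b ^ n = P + r n := by
    intro n
    induction n with
    | zero => exact ⟨0, by simp [r]⟩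
    | succ n ih =>
      obtain ⟨P, hP⟩ := ih
      exact ⟨P * b + a n, by rw [pow_succ, ← mul_assoc, hP, add_mul, hr_succ]; push_cast; ring⟩
  obtain ⟨P, hP⟩ := hint n
  have : ofDigits a * b ^ (n + 1) = ((P * b + a n : ℤ) : ℝ) + r (n + 1) := by
    rw [pow_succ, ← mul_assoc, hP, add_mul, hr_succ]
    push_cast
    ring
  rw [digit, this, Int.floor_intCast_add, Int.floor_eq_zero_iff.2 (hr _), add_zero,
    Int.mul_add_emod_self_right]
  exact Int.emod_eq_of_lt (by positivity) (by exact_mod_cast (a n).2)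

noncomputable def sturmian (y : ℝ) (j : ℕ) : Fin 2 := if ⌊y * (j + 1)⌋₊ = ⌊y * j⌋₊ then 0 else 1

theorem sum_sturmian {y : ℝ} (hy : 0 ≤ y) (hy1 : y ≤ 1) (n : ℕ) :
    ∑ j ∈ Finset.range n, (sturmian y j : ℕ) = ⌊y * n⌋₊ := by
  have hmono : Monotone fun j : ℕ => ⌊y * j⌋₊ := fun i j hij => Nat.floor_le_floor (by gcongr)
  have := Finset.sum_range_tsub hmono n
  simp only [CharP.cast_eq_zero, mul_zero, Nat.floor_zero, tsub_zero] at this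
  rw [← this]
  refine Finset.sum_congr rfl fun j _ => ?_
  have h1 : ⌊y * (j + 1)⌋₊ ≤ ⌊y * j⌋₊ + 1 := by
    rw [← Nat.floor_add_one (by positivity)]
    exact Nat.floor_le_floor (by nlinarith)
  have h2 : ⌊y * j⌋₊ ≤ ⌊y * (j + 1)⌋₊ := by simpa using hmono j.le_succ
  unfold sturmian
  push_cast
  split_ifs with h <;> simp <;> omega

theorem exists_sturmian_eq_zero {y : ℝ} (hy : 0 ≤ y) (hy1 : y < 1) (n : ℕ) :
    ∃ k ≥ n, sturmian y k = 0 := by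
  by_contra! h
  have hstep : ∀ K, K ≤ ⌊y * (n + K : ℕ)⌋₊ := by
    intro K
    induction K with
    | zero => simp
    | succ K ih =>
      have h1 : ⌊y * (n + K + 1 : ℕ)⌋₊ ≠ ⌊y * (n + K : ℕ)⌋₊ := fun h' =>
        h (n + K) (by omega) (if_pos (by exact_mod_cast h'))
      have h2 : ⌊y * (n + K : ℕ)⌋₊ ≤ ⌊y * (n + K + 1 : ℕ)⌋₊ :=
        Nat.floor_le_floor (mul_le_mul_of_nonneg_left (by push_cast; linarith) hy)
      rw [← add_assoc]
      omega
  obtain ⟨K, hK⟩ := exists_nat_gt (y * n / (1 - y))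
  have := (Nat.le_floor_iff (by positivity)).1 (hstep K)
  rw [div_lt_iff₀ (by linarith)] at hK
  push_cast at this
  nlinarith

noncomputable def binaryMean (x : ℝ) (n : ℕ) : ℝ := (∑ k ∈ Finset.range n, (digit 2 x k : ℝ)) / n

noncomputable def binaryDensity (x : ℝ) : ℝ := limsup (binaryMean x) atTop

theorem measurable_binaryDensity : Measurable binaryDensity :=
  Measurable.limsup fun _ =>
    (Finset.measurable_sum _ fun k _ => measurable_digit 2 k).div_const _

theorem tendsto_binaryMean_of_digit_eq_sturmian {x y : ℝ} (hy : 0 ≤ y) (hy1 : y ≤ 1) {N : ℕ}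
    (hx : ∀ j, digit 2 x (N + j) = sturmian y j) :
    Tendsto (binaryMean x) atTop (𝓝 y) := by
  set C := ∑ k ∈ Finset.range N, (digit 2 x k : ℝ)
  have hmean : ∀ n, binaryMean x (n + N) = (C + ⌊y * n⌋₊) / (n + N) := fun n => by
    simp only [binaryMean, add_comm n N, Finset.sum_range_add, hx, ← sum_sturmian hy hy1 n]
    push_cast
    ring
  have hfloor : Tendsto (fun n : ℕ => (⌊y * n⌋₊ : ℝ) / n) atTop (𝓝 y) :=
    (tendsto_nat_floor_mul_div_atTop hy).comp tendsto_natCast_atTop_atTop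
  have hC : Tendsto (fun n : ℕ => C / (n + N)) atTop (𝓝 0) :=
    tendsto_const_nhds.div_atTop (tendsto_natCast_atTop_atTop.atTop_add tendsto_const_nhds)
  have := hC.add (hfloor.mul (tendsto_natCast_div_add_atTop (N : ℝ)))
  rw [zero_add, mul_one] at this
  rw [← tendsto_add_atTop_iff_nat N]
  refine this.congr' ((eventually_ne_atTop 0).mono fun n hn => ?_)
  simp only [hmean]
  have : (n : ℝ) ≠ 0 := by exact_mod_cast hn
  field_simp

theorem exists_intCast_add_div_two_pow_mem_Ioo {a b z : ℝ} (hab : a < b) (hz : z ∈ Icc 0 1) :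
    ∃ (m : ℤ) (N : ℕ), (m + z) / 2 ^ N ∈ Ioo a b := by
  obtain ⟨N, hN⟩ := pow_unbounded_of_one_lt (2 / (b - a)) one_lt_two
  have hpos : (0 : ℝ) < 2 ^ N := by positivity
  refine ⟨⌊a * 2 ^ N⌋ + 1, N, ?_⟩
  rw [div_lt_iff₀ (by linarith)] at hN
  have h1 := Int.floor_le (a * 2 ^ N)
  have h2 := Int.lt_floor_add_one (a * 2 ^ N)
  constructor
  · rw [lt_div_iff₀ hpos]; push_cast; linarith [hz.1]
  · rw [div_lt_iff₀ hpos]; push_cast; nlinarith [hz.2]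

theorem exists_mem_Ioo_binaryDensity_eq {a b y : ℝ} (hab : a < b) (hy : y ∈ Ico 0 1) :
    ∃ x ∈ Ioo a b, binaryDensity x = y := by
  set z := ofDigits (sturmian y)
  have hz : ∀ j, digit 2 z j = sturmian y j :=
    digit_ofDigits fun n => by
      obtain ⟨k, hk, h0⟩ := exists_sturmian_eq_zero hy.1 hy.2 n
      exact ⟨k, hk, by simp [h0]⟩
  obtain ⟨m, N, hx⟩ := exists_intCast_add_div_two_pow_mem_Ioo (z := z) hab
    ⟨ofDigits_nonneg _, ofDigits_le_one _⟩
  refine ⟨_, hx,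
    (tendsto_binaryMean_of_digit_eq_sturmian hy.1 hy.2.le (N := N) fun j => ?_).limsup_eq⟩
  rw [← hz, ← digit_intCast_add_div_pow two_ne_zero m z N j]
  norm_num

theorem log_sigmoid_div_one_sub_sigmoid (z : ℝ) : log (sigmoid z / (1 - sigmoid z)) = z := by
  rw [← sigmoid_neg, ← sigmoid_mul_rexp_neg, div_mul_cancel_left₀ (sigmoid_pos z).ne', exp_neg,
    inv_inv, log_exp]

theorem exists_measurable_everywhereSurjective :
    ∃ φ : ℝ → ℝ, Measurable φ ∧ EverywhereSurjective φ := by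
  refine ⟨fun x => log (binaryDensity x / (1 - binaryDensity x)),
    (measurable_binaryDensity.div (measurable_const.sub measurable_binaryDensity)).log,
    fun a b hab => eq_univ_of_forall fun z => ?_⟩
  obtain ⟨x, hx, hxz⟩ :=
    exists_mem_Ioo_binaryDensity_eq hab ⟨(sigmoid_pos z).le, sigmoid_lt_one z⟩
  exact ⟨x, hx, by simp only [hxz, log_sigmoid_div_one_sub_sigmoid]⟩

theorem stmt_4 :
    ∃ M : Submodule ℝ (ℝ → ℝ), Module.rank ℝ M = Cardinal.continuum ∧
      ∀ f ∈ M, f ≠ 0 → Measurable f ∧ EverywhereSurjective f := by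
  obtain ⟨φ, hφm, hφs⟩ := exists_measurable_everywhereSurjective
  obtain ⟨M, hrank, hM⟩ := exists_submodule_rank_eq_of_linearCombination_mem
    (A := {f | Measurable f ∧ EverywhereSurjective f}) (fun h => not_everywhereSurjective_zero h.2)
    (fun c : Ioi (0 : ℝ) => fun x => sinh (c * φ x)) fun l hl => by
      rw [linearCombination_sinh_comp]
      exact ⟨(sinhSum.continuous l).measurable.comp hφm, hφs.comp (sinhSum.surjective l hl)⟩
  exact ⟨M, hrank.trans (mk_Ioi_real 0), hM⟩
end

section
/- If f : ℝ → ℝ is a Lebesgue measurable everywhere surjective function, then for each nonzero h in the span of {φ_α ∘ f : α > 0}, where φ_α(x) = e^{αx} - e^{-αx}, the functions h_n := h/n (n ∈ ℕ) form a sequence of measurable everywhere surjective functions converging pointwise to 0. -/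
open Filter

private lemma exp_mul_tendsto_zero {d : ℝ} (hd : d < 0) :
    Tendsto (fun t : ℝ => Real.exp (d * t)) atTop (nhds 0) := by
  have h1 : Tendsto (fun t : ℝ => (-d) * t) atTop atTop :=
    Tendsto.const_mul_atTop (by linarith) tendsto_id
  have := Real.tendsto_exp_neg_atTop_nhds_zero.comp h1
  refine this.congr fun t => ?_
  simp [Function.comp]

private lemma tendsto_aux (s : Finset ℝ) (hs : ∀ α ∈ s, 0 < α) (hne : s.Nonempty)
    (c : ℝ → ℝ) (hpos : 0 < c (s.max' hne)) :
    Tendsto (fun t : ℝ => ∑ α ∈ s, c α * (Real.exp (α * t) - Real.exp (-(α * t))))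
      atTop atTop := by
  set β := s.max' hne with hβdef
  have hβmem : β ∈ s := s.max'_mem hne
  have hβpos : 0 < β := hs β hβmem
  -- the normalized sum
  set S : ℝ → ℝ := fun t => ∑ α ∈ s, c α * (Real.exp ((α - β) * t) - Real.exp ((-(α + β)) * t))
    with hSdef
  have hkey : ∀ t, (∑ α ∈ s, c α * (Real.exp (α * t) - Real.exp (-(α * t))))
      = S t * Real.exp (β * t) := by
    intro t
    rw [hSdef, Finset.sum_mul]
    refine Finset.sum_congr rfl fun α _ => ?_
    have : c α * (Real.exp ((α - β) * t) - Real.exp ((-(α + β)) * t)) * Real.exp (β * t)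
        = c α * (Real.exp ((α - β) * t) * Real.exp (β * t)
            - Real.exp ((-(α + β)) * t) * Real.exp (β * t)) := by ring
    rw [this, ← Real.exp_add, ← Real.exp_add,
      show (α - β) * t + β * t = α * t by ring,
      show (-(α + β)) * t + β * t = -(α * t) by ring]
  have hS : Tendsto S atTop (nhds (c β)) := by
    have hsum : Tendsto S atTop (nhds (∑ α ∈ s, if α = β then c β else 0)) := by
      rw [hSdef]
      refine tendsto_finset_sum _ fun α hα => ?_
      by_cases hαβ : α = β
      · rw [if_pos hαβ]
        have h2 : Tendsto (fun t : ℝ => Real.exp ((-(α + β)) * t)) atTop (nhds 0) :=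
          exp_mul_tendsto_zero (by have h3 := hs α hα; linarith)
        have h1 : Tendsto (fun t : ℝ => Real.exp ((α - β) * t)) atTop (nhds 1) := by
          rw [hαβ]
          simp only [sub_self, zero_mul, Real.exp_zero]
          exact tendsto_const_nhds
        have h4 := (h1.sub h2).const_mul (c α)
        simpa [hαβ] using h4
      · simp only [if_neg hαβ]
        have hαlt : α < β := lt_of_le_of_ne (s.le_max' α hα) hαβ
        have h1 : Tendsto (fun t : ℝ => Real.exp ((α - β) * t)) atTop (nhds 0) :=
          exp_mul_tendsto_zero (by linarith)
        have h2 : Tendsto (fun t : ℝ => Real.exp ((-(α + β)) * t)) atTop (nhds 0) :=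
          exp_mul_tendsto_zero (by have := hs α hα; linarith)
        have := (h1.sub h2).const_mul (c α)
        simpa using this
    have : (∑ α ∈ s, if α = β then c β else 0) = c β := by
      rw [Finset.sum_ite_eq' s β (fun _ => c β)]
      simp [hβmem]
    rwa [this] at hsum
  have hexp : Tendsto (fun t : ℝ => Real.exp (β * t)) atTop atTop :=
    Real.tendsto_exp_atTop.comp (Tendsto.const_mul_atTop hβpos tendsto_id)
  have := Tendsto.pos_mul_atTop hpos hS hexp
  exact this.congr fun t => (hkey t).symm

private lemma surj_aux (s : Finset ℝ) (hs : ∀ α ∈ s, 0 < α) (hne : s.Nonempty)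
    (c : ℝ → ℝ) (hc : c (s.max' hne) ≠ 0) :
    Function.Surjective
      (fun t : ℝ => ∑ α ∈ s, c α * (Real.exp (α * t) - Real.exp (-(α * t)))) := by
  set g : ℝ → ℝ := fun t => ∑ α ∈ s, c α * (Real.exp (α * t) - Real.exp (-(α * t)))
    with hgdef
  have hcont : Continuous g := by
    apply continuous_finset_sum
    intro α _
    exact continuous_const.mul ((Real.continuous_exp.comp (continuous_const.mul continuous_id)).sub
      (Real.continuous_exp.comp ((continuous_const.mul continuous_id).neg)))
  have hodd : ∀ t, g (-t) = -g t := by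
    intro t
    rw [hgdef]
    simp only
    rw [← Finset.sum_neg_distrib]
    refine Finset.sum_congr rfl fun α _ => ?_
    simp only [mul_neg, neg_neg]
    ring
  -- from atTop-atTop behaviour, deduce surjectivity
  have main : ∀ (c' : ℝ → ℝ), 0 < c' (s.max' hne) →
      Function.Surjective
        (fun t : ℝ => ∑ α ∈ s, c' α * (Real.exp (α * t) - Real.exp (-(α * t)))) := by
    intro c' hpos
    set g' : ℝ → ℝ := fun t => ∑ α ∈ s, c' α * (Real.exp (α * t) - Real.exp (-(α * t)))
      with hg'def
    have hcont' : Continuous g' := by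
      apply continuous_finset_sum
      intro α _
      exact continuous_const.mul
        ((Real.continuous_exp.comp (continuous_const.mul continuous_id)).sub
          (Real.continuous_exp.comp ((continuous_const.mul continuous_id).neg)))
    have hodd' : ∀ t, g' (-t) = -g' t := by
      intro t
      rw [hg'def]
      simp only
      rw [← Finset.sum_neg_distrib]
      refine Finset.sum_congr rfl fun α _ => ?_
      simp only [mul_neg, neg_neg]
      ring
    have htop : Tendsto g' atTop atTop := tendsto_aux s hs hne c' hpos
    have hbot : Tendsto g' atBot atBot := by
      have h1 : Tendsto (fun t => g' (-t)) atTop atBot :=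
        (tendsto_neg_atTop_atBot.comp htop).congr fun t => (hodd' t).symm
      have h2 : Tendsto (fun t : ℝ => g' (-(-t))) atBot atBot :=
        h1.comp tendsto_neg_atBot_atTop
      exact h2.congr fun t => by rw [neg_neg]
    exact hcont'.surjective htop hbot
  rcases hc.lt_or_gt with hneg | hpos
  · -- leading coefficient negative: use -c
    have hsurj := main (fun α => -(c α)) (by simpa using hneg)
    intro y
    obtain ⟨t, ht⟩ := hsurj (-y)
    refine ⟨t, ?_⟩
    simp only at ht
    have : (∑ α ∈ s, -(c α) * (Real.exp (α * t) - Real.exp (-(α * t)))) = -g t := by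
      rw [← Finset.sum_neg_distrib]
      exact Finset.sum_congr rfl fun α _ => by ring
    rw [this] at ht
    have := neg_injective ht
    exact this
  · exact main c hpos

theorem stmt_5 (f : ℝ → ℝ) (hmeas : Measurable f) (hes : EverywhereSurjective f)
    (h : ℝ → ℝ)
    (hh : h ∈ Submodule.span ℝ
      {g : ℝ → ℝ | ∃ α : ℝ, 0 < α ∧
        g = fun x => Real.exp (α * f x) - Real.exp (-(α * f x))})
    (hh0 : h ≠ 0) :
    (∀ n : ℕ, 1 ≤ n →
        Measurable (fun x => h x / n) ∧ EverywhereSurjective (fun x => h x / n)) ∧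
      ∀ x : ℝ, Tendsto (fun n : ℕ => h x / n) atTop (nhds 0) := by
  -- Step 1: express h as g ∘ f for a finite linear combination g of the φ_α
  have hset : {g : ℝ → ℝ | ∃ α : ℝ, 0 < α ∧
      g = fun x => Real.exp (α * f x) - Real.exp (-(α * f x))}
      = (fun α : ℝ => (fun x => Real.exp (α * f x) - Real.exp (-(α * f x)))) '' Set.Ioi 0 := by
    ext g
    constructor
    · rintro ⟨α, hα, rfl⟩; exact ⟨α, hα, rfl⟩
    · rintro ⟨α, hα, rfl⟩; exact ⟨α, hα, rfl⟩
  rw [hset] at hh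
  rw [Finsupp.mem_span_image_iff_linearCombination] at hh
  obtain ⟨l, hlsupp, hl⟩ := hh
  rw [Finsupp.mem_supported] at hlsupp
  set g : ℝ → ℝ := fun t => ∑ α ∈ l.support, l α * (Real.exp (α * t) - Real.exp (-(α * t)))
    with hgdef
  have hgf : h = fun x => g (f x) := by
    rw [← hl]
    funext x
    rw [Finsupp.linearCombination_apply, Finsupp.sum, hgdef]
    simp only
    rw [Finset.sum_apply]
    refine Finset.sum_congr rfl fun α _ => ?_
    simp [smul_eq_mul]
  have hl0 : l ≠ 0 := by
    rintro rfl
    apply hh0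
    rw [hgf]
    funext x
    simp [hgdef]
  have hne : l.support.Nonempty := Finsupp.support_nonempty_iff.2 hl0
  have hspos : ∀ α ∈ l.support, 0 < α := fun α hα => hlsupp hα
  have hcne : l (l.support.max' hne) ≠ 0 :=
    Finsupp.mem_support_iff.1 (l.support.max'_mem hne)
  have hgsurj : Function.Surjective g := surj_aux l.support hspos hne l hcne
  have hgcont : Continuous g := by
    apply continuous_finset_sum
    intro α _
    exact continuous_const.mul ((Real.continuous_exp.comp (continuous_const.mul continuous_id)).sub
      (Real.continuous_exp.comp ((continuous_const.mul continuous_id).neg)))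
  constructor
  · intro n hn
    have hn0 : (n : ℝ) ≠ 0 := by positivity
    constructor
    · rw [hgf]
      exact ((hgcont.measurable.comp hmeas).div_const _)
    · intro a b hab
      rw [Set.eq_univ_iff_forall]
      intro y
      obtain ⟨t, ht⟩ := hgsurj (y * n)
      have := hes a b hab
      have hmem : t ∈ f '' Set.Ioo a b := by rw [this]; trivial
      obtain ⟨x, hx, hfx⟩ := hmem
      refine ⟨x, hx, ?_⟩
      rw [hgf]
      simp only
      rw [hfx, ht]
      field_simp
  · intro x
    exact tendsto_const_div_atTop_nhds_zero_nat (h x)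
end

section
/- If f : ℝ → ℝ is a differentiable strictly monotone function whose derivative vanishes on a dense subset D ⊊ ℝ, and φ : ℝ → ℝ is a nonzero exponential-like function (a finite sum φ(x) = Σ a_j e^{b_j x} with nonzero a_j and distinct nonzero b_j), then φ ∘ f is differentiable, (φ ∘ f)' vanishes on a dense set, and φ ∘ f is nonconstant on every nondegenerate interval of ℝ. -/
/-!
Since `φ` is differentiable, the chain rule `(φ ∘ f)' = φ'(f) · f'` makes `(φ ∘ f)'` vanish
wherever `f'` does. If `φ ∘ f` were constant on an interval, then, `f` being continuous and
injective, `φ` would be constant on a nondegenerate interval, hence (by analyticity) on all of `ℝ`.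
Viewing the constant as an exponential with exponent `0`, the derivatives at `0` of the resulting
vanishing sum `∑ c_j e^{b_j x}` are the power sums `∑ c_j b_j ^ n`, so invertibility of the
Vandermonde matrix of the distinct exponents forces every coefficient, in particular every `a_j`,
to be `0`.
-/

open Real Set

lemma iteratedDeriv_sum_mul_exp {m : ℕ} (c b : Fin m → ℝ) (n : ℕ) (x : ℝ) :
    iteratedDeriv n (fun x => ∑ j, c j * exp (b j * x)) x =
      ∑ j, c j * b j ^ n * exp (b j * x) := by
  rw [iteratedDeriv_fun_sum fun j _ => by fun_prop]
  simp only [iteratedDeriv_const_mul_field, iteratedDeriv_exp_const_mul, mul_assoc]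

lemma eq_zero_of_sum_mul_exp_eq_zero {m : ℕ} {c b : Fin m → ℝ} (hb : Function.Injective b)
    (h : ∀ x, ∑ j, c j * exp (b j * x) = 0) : c = 0 := by
  have hmoments (n : ℕ) : ∑ j, c j * b j ^ n = 0 := by
    have := iteratedDeriv_sum_mul_exp c b n 0
    simpa [funext h] using this.symm
  have hvdm : (Matrix.vandermonde b).transpose.mulVec c = 0 := by
    ext n
    simpa [Matrix.mulVec, dotProduct, mul_comm] using hmoments n
  refine Matrix.eq_zero_of_mulVec_eq_zero ?_ hvdm
  rwa [Matrix.det_transpose, Matrix.det_vandermonde_ne_zero_iff]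

lemma analyticOnNhd_sum_mul_exp {m : ℕ} (c b : Fin m → ℝ) :
    AnalyticOnNhd ℝ (fun x => ∑ j, c j * exp (b j * x)) univ := by
  intro x _
  fun_prop

-- A constant is the exponential with exponent `0`, which is distinct from every `b j`.
lemma eq_zero_of_sum_mul_exp_eqOn_const {m : ℕ} {c b : Fin m → ℝ} (hb₀ : ∀ j, b j ≠ 0)
    (hb : Function.Injective b) {s : Set ℝ} (hs : IsOpen s) (hne : s.Nonempty) {C : ℝ}
    (h : EqOn (fun x => ∑ j, c j * exp (b j * x)) (fun _ => C) s) : c = 0 := by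
  obtain ⟨x₀, hx₀⟩ := hne
  set c' : Fin (m + 1) → ℝ := Fin.cons (-C) c
  set b' : Fin (m + 1) → ℝ := Fin.cons 0 b
  have hzero : ∀ x, ∑ j, c' j * exp (b' j * x) = 0 := by
    have hanalytic := analyticOnNhd_sum_mul_exp c' b'
    refine fun x => hanalytic.eqOn_zero_of_preconnected_of_eventuallyEq_zero
      isPreconnected_univ (mem_univ x₀) ?_ (mem_univ x)
    filter_upwards [hs.mem_nhds hx₀] with x hx
    have hCx : ∑ j, c j * exp (b j * x) = C := h hx
    simp only [c', b', Fin.sum_univ_succ, Fin.cons_zero, Fin.cons_succ, zero_mul, exp_zero,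
      mul_one, hCx, neg_add_cancel, Pi.zero_apply]
  have hinj : Function.Injective b' :=
    Fin.cons_injective_iff.mpr ⟨fun ⟨j, hj⟩ => hb₀ j hj, hb⟩
  ext j
  simpa [c'] using congrFun (eq_zero_of_sum_mul_exp_eq_zero hinj hzero) j.succ

lemma interior_image_Ioo_nonempty {f : ℝ → ℝ} {c d : ℝ} (hcd : c < d)
    (hf : ContinuousOn f (Ioo c d)) (hinj : InjOn f (Ioo c d)) :
    (interior (f '' Ioo c d)).Nonempty := by
  obtain ⟨p, hcp, hpd⟩ := exists_between hcd
  obtain ⟨q, hpq, hqd⟩ := exists_between hpd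
  have hp : p ∈ Ioo c d := ⟨hcp, hpd⟩
  have hq : q ∈ Ioo c d := ⟨hcp.trans hpq, hqd⟩
  have hfpq : f p ≠ f q := fun h => hpq.ne (hinj hp hq h)
  have hsub : uIcc (f p) (f q) ⊆ f '' Ioo c d :=
    (isPreconnected_Ioo.image f hf).ordConnected.uIcc_subset
      (mem_image_of_mem f hp) (mem_image_of_mem f hq)
  refine (nonempty_Ioo.mpr (min_lt_max.mpr hfpq)).mono ?_
  exact interior_maximal (Ioo_subset_Icc_self.trans hsub) isOpen_Ioo

theorem stmt_6_general (f : ℝ → ℝ) (hdiff : Differentiable ℝ f)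
    (hmono : StrictMono f ∨ StrictAnti f)
    (hdense : Dense {x : ℝ | deriv f x = 0})
    (m : ℕ) (hm : 1 ≤ m) (a b : Fin m → ℝ)
    (ha : ∀ j, a j ≠ 0) (hb : ∀ j, b j ≠ 0) (hbinj : Function.Injective b)
    (φ : ℝ → ℝ) (hφ : φ = fun x => ∑ j, a j * Real.exp (b j * x)) :
    Differentiable ℝ (φ ∘ f) ∧
      Dense {x : ℝ | deriv (φ ∘ f) x = 0} ∧
      ∀ c d : ℝ, c < d → ∃ x ∈ Set.Ioo c d, ∃ y ∈ Set.Ioo c d,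
        (φ ∘ f) x ≠ (φ ∘ f) y := by
  have hφdiff : Differentiable ℝ φ := by subst hφ; fun_prop
  refine ⟨hφdiff.comp hdiff, hdense.mono fun x (hx : deriv f x = 0) => ?_,
    fun c d hcd => ?_⟩
  · show deriv (φ ∘ f) x = 0
    rw [deriv_comp x (hφdiff _) (hdiff x), hx, mul_zero]
  by_contra! hconst
  have hinj : InjOn f (Ioo c d) :=
    (hmono.elim StrictMono.injective StrictAnti.injective).injOn
  obtain ⟨p, hp⟩ := nonempty_Ioo.mpr hcd
  have hφconst : EqOn φ (fun _ => φ (f p)) (interior (f '' Ioo c d)) := by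
    intro z hz
    obtain ⟨x, hx, rfl⟩ := interior_subset hz
    exact hconst x hx p hp
  subst hφ
  have ha_zero := eq_zero_of_sum_mul_exp_eqOn_const hb hbinj isOpen_interior
    (interior_image_Ioo_nonempty hcd hdiff.continuous.continuousOn hinj) hφconst
  exact ha ⟨0, hm⟩ (congrFun ha_zero _)

theorem stmt_6 (f : ℝ → ℝ) (hdiff : Differentiable ℝ f)
    (hmono : StrictMono f ∨ StrictAnti f)
    (hdense : Dense {x : ℝ | deriv f x = 0})
    (hne : {x : ℝ | deriv f x = 0} ≠ Set.univ)
    (m : ℕ) (hm : 1 ≤ m) (a b : Fin m → ℝ)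
    (ha : ∀ j, a j ≠ 0) (hb : ∀ j, b j ≠ 0) (hbinj : Function.Injective b)
    (φ : ℝ → ℝ) (hφ : φ = fun x => ∑ j, a j * Real.exp (b j * x)) :
    Differentiable ℝ (φ ∘ f) ∧
      Dense {x : ℝ | deriv (φ ∘ f) x = 0} ∧
      ∀ c d : ℝ, c < d → ∃ x ∈ Set.Ioo c d, ∃ y ∈ Set.Ioo c d,
        (φ ∘ f) x ≠ (φ ∘ f) y :=
  stmt_6_general f hdiff hmono hdense m hm a b ha hb hbinj φ hφ
end

section
/- The functions ψ_c : ℝ → ℝ, ψ_c(x) = e^{|x|^c} - e^{-|x|^c} for c > 0, freely generate an algebra: for any nonzero polynomial P in p variables without constant term and any distinct positive reals c₁,…,c_p, the function x ↦ P(ψ_{c₁}(x),…,ψ_{c_p}(x)) satisfies lim_{x→∞} |P(ψ_{c₁}(x),…,ψ_{c_p}(x))| = +∞; in particular it is not identically zero. -/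
/-!
For `x ≥ 0`, `ψ_c(x) = e^{x^c} (1 - e^{-2x^c})`, so the monomial `∏ ψ_{c_i}^{m_i}` is
`e^{E_m(x)} (1 + o(1))` with `E_m(x) = ∑ m_i x^{c_i}`. As the `c_i` are distinct and positive,
for `m ≠ m'` the difference `E_m - E_{m'}` tends to `±∞` (with the sign of its leading
coefficient), so the monomials of `P` are totally ordered by growth and one of them, `M`,
dominates all others. Hence `P(ψ(x)) = e^{E_M(x)} (coeff_M P + o(1))`, and `E_M → ∞` because
`M ≠ 0` when `P` has no constant term.
-/

open Filter Function Topology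

theorem Finset.exists_rel_max {α : Type*} {r : α → α → Prop} (irrefl : ∀ a, ¬r a a)
    (trans : ∀ a b c, r a b → r b c → r a c) (total : ∀ a b, a ≠ b → r a b ∨ r b a)
    {s : Finset α} (hs : s.Nonempty) : ∃ M ∈ s, ∀ m ∈ s, m ≠ M → r m M := by
  have : IsStrictOrder α r := { irrefl, trans }
  let := partialOrderOfSO r
  obtain ⟨M, hM⟩ := s.finite_toSet.exists_maximal hs
  exact ⟨M, hM.prop, fun m hm hne =>
    (total m M hne).resolve_right fun h => hne (hM.eq_of_ge hm (Or.inr h))⟩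

noncomputable def psi (c x : ℝ) : ℝ :=
  Real.exp (|x| ^ c) - Real.exp (-(|x| ^ c))

theorem psi_mul_exp_neg (c : ℝ) {x : ℝ} (hx : 0 ≤ x) :
    psi c x * Real.exp (-(x ^ c)) = 1 - Real.exp (-(2 * x ^ c)) := by
  rw [psi, abs_of_nonneg hx, sub_mul, ← Real.exp_add, ← Real.exp_add]
  ring_nf
  rw [Real.exp_zero]

theorem tendsto_psi_mul_exp_neg {c : ℝ} (hc : 0 < c) :
    Tendsto (fun x => psi c x * Real.exp (-(x ^ c))) atTop (𝓝 1) := by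
  have hsmall : Tendsto (fun x : ℝ => Real.exp (-(2 * x ^ c))) atTop (𝓝 0) :=
    Real.tendsto_exp_atBot.comp <| tendsto_neg_atTop_atBot.comp <|
      (tendsto_rpow_atTop hc).const_mul_atTop two_pos
  have hlim : Tendsto (fun x : ℝ => 1 - Real.exp (-(2 * x ^ c))) atTop (𝓝 1) := by
    simpa using tendsto_const_nhds.sub hsmall
  refine hlim.congr' ?_
  filter_upwards [eventually_ge_atTop 0] with x hx
  exact (psi_mul_exp_neg c hx).symm

section

variable {ι : Type*} [Fintype ι]

noncomputable def rpowSum (c d : ι → ℝ) (x : ℝ) : ℝ :=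
  ∑ i, d i * x ^ c i

theorem tendsto_rpowSum_sub_leading {c d : ι → ℝ} {j : ι}
    (hlead : ∀ i ≠ j, d i ≠ 0 → c i < c j) :
    Tendsto (rpowSum (fun i => c i - c j) d) atTop (𝓝 (d j)) := by
  classical
  have hterm (i : ι) : Tendsto (fun x : ℝ => d i * x ^ (c i - c j)) atTop
      (𝓝 (Pi.single (M := fun _ => ℝ) j (d j) i)) := by
    by_cases hij : i = j
    · subst hij
      simp
    by_cases hdi : d i = 0
    · simp [hdi, hij]
    have hneg : Tendsto (fun x : ℝ => x ^ (c i - c j)) atTop (𝓝 0) := by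
      simpa using tendsto_rpow_neg_atTop (sub_pos.2 (hlead i hij hdi))
    simpa [hij] using hneg.const_mul (d i)
  unfold rpowSum
  simpa using tendsto_finsetSum Finset.univ fun i _ => hterm i

theorem tendsto_rpowSum_atTop_of_leading {c d : ι → ℝ} {j : ι} (hcj : 0 < c j) (hdj : 0 < d j)
    (hlead : ∀ i ≠ j, d i ≠ 0 → c i < c j) : Tendsto (rpowSum c d) atTop atTop := by
  refine ((tendsto_rpow_atTop hcj).atTop_mul_pos hdj (tendsto_rpowSum_sub_leading hlead)).congr' ?_
  filter_upwards [eventually_gt_atTop 0] with x hx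
  simp only [rpowSum, Finset.mul_sum]
  refine Finset.sum_congr rfl fun i _ => ?_
  rw [mul_left_comm, ← Real.rpow_add hx, add_sub_cancel]

theorem rpowSum_sub (c d d' : ι → ℝ) (x : ℝ) :
    rpowSum c (d - d') x = rpowSum c d x - rpowSum c d' x := by
  simp only [rpowSum, Pi.sub_apply, sub_mul, Finset.sum_sub_distrib]

theorem rpowSum_neg (c d : ι → ℝ) (x : ℝ) : rpowSum c (-d) x = -rpowSum c d x := by
  simp only [rpowSum, Pi.neg_apply, neg_mul, Finset.sum_neg_distrib]

theorem tendsto_rpowSum_atTop_or_atBot {c d : ι → ℝ} (hc : ∀ i, 0 < c i) (hcinj : Injective c)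
    (hd : d ≠ 0) :
    Tendsto (rpowSum c d) atTop atTop ∨ Tendsto (rpowSum c d) atTop atBot := by
  classical
  obtain ⟨i₀, hi₀⟩ := Function.ne_iff.1 hd
  obtain ⟨j, hj, hmax⟩ := Finset.exists_max_image {i | d i ≠ 0} c ⟨i₀, by simpa using hi₀⟩
  have hdj : d j ≠ 0 := (Finset.mem_filter.1 hj).2
  have hlead : ∀ i ≠ j, d i ≠ 0 → c i < c j := fun i hij hdi =>
    (hmax i (by simpa using hdi)).lt_of_ne (hcinj.ne hij)
  rcases hdj.lt_or_gt with hneg | hpos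
  · right
    have := tendsto_rpowSum_atTop_of_leading (d := -d) (hc j) (neg_pos.2 hneg)
      (fun i hij hdi => hlead i hij (neg_ne_zero.1 hdi))
    rw [show rpowSum c (-d) = fun x => -rpowSum c d x from funext (rpowSum_neg c d)] at this
    exact tendsto_neg_atTop_iff.1 this
  · exact Or.inl (tendsto_rpowSum_atTop_of_leading (hc j) hpos hlead)

theorem tendsto_rpowSum_natCast_atTop {c : ι → ℝ} (hc : ∀ i, 0 < c i) {m : ι → ℕ} (hm : m ≠ 0) :
    Tendsto (rpowSum c fun i => (m i : ℝ)) atTop atTop := by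
  obtain ⟨j, hj⟩ := Function.ne_iff.1 hm
  refine tendsto_atTop_mono' atTop ?_ (tendsto_rpow_atTop (hc j))
  filter_upwards [eventually_ge_atTop 0] with x hx
  calc x ^ c j ≤ m j * x ^ c j :=
        le_mul_of_one_le_left (by positivity) (by exact_mod_cast Nat.one_le_iff_ne_zero.2 hj)
    _ ≤ rpowSum c (fun i => (m i : ℝ)) x :=
        Finset.single_le_sum (f := fun i => (m i : ℝ) * x ^ c i) (fun i _ => by positivity)
          (Finset.mem_univ j)

theorem exists_dominant_exponent {c : ι → ℝ} (hc : ∀ i, 0 < c i) (hcinj : Injective c)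
    {s : Finset (ι →₀ ℕ)} (hs : s.Nonempty) :
    ∃ M ∈ s, ∀ m ∈ s, m ≠ M → Tendsto
      (fun x => rpowSum c (fun i => (m i : ℝ)) x - rpowSum c (fun i => (M i : ℝ)) x)
      atTop atBot := by
  refine Finset.exists_rel_max (fun m => ?_) (fun a b d hab hbd => ?_) (fun a b hab => ?_) hs
  · simpa only [sub_self] using not_tendsto_const_atBot 0 atTop
  · simpa only [sub_add_sub_cancel] using hab.atBot_add_atBot hbd
  · have hd : (fun i => (a i : ℝ)) - (fun i => (b i : ℝ)) ≠ 0 := fun h =>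
      hab (Finsupp.ext fun i => by simpa using sub_eq_zero.1 (congrFun h i))
    simp only [← rpowSum_sub]
    rcases tendsto_rpowSum_atTop_or_atBot hc hcinj hd with htop | hbot
    · refine Or.inr (tendsto_neg_atTop_iff.1 (htop.congr fun x => ?_))
      rw [rpowSum_sub, rpowSum_sub, neg_sub]
    · exact Or.inl hbot

theorem tendsto_prod_psi_pow_mul_exp_neg {c : ι → ℝ} (hc : ∀ i, 0 < c i) (m : ι → ℕ) :
    Tendsto (fun x => (∏ i, psi (c i) x ^ m i) * Real.exp (-rpowSum c (fun i => (m i : ℝ)) x))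
      atTop (𝓝 1) := by
  have hlim : Tendsto (fun x => ∏ i, (psi (c i) x * Real.exp (-(x ^ c i))) ^ m i) atTop (𝓝 1) := by
    simpa using tendsto_finsetProd Finset.univ fun i _ => (tendsto_psi_mul_exp_neg (hc i)).pow (m i)
  refine hlim.congr fun x => ?_
  simp only [rpowSum, ← Finset.sum_neg_distrib, Real.exp_sum, ← mul_neg, Real.exp_nat_mul,
    ← Finset.prod_mul_distrib, mul_pow]

theorem tendsto_eval_psi_mul_exp_neg {c : ι → ℝ} (hc : ∀ i, 0 < c i) {P : MvPolynomial ι ℝ}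
    {M : ι →₀ ℕ} (hM : M ∈ P.support) (hdom : ∀ m ∈ P.support, m ≠ M → Tendsto
      (fun x => rpowSum c (fun i => (m i : ℝ)) x - rpowSum c (fun i => (M i : ℝ)) x) atTop atBot) :
    Tendsto (fun x => MvPolynomial.eval (fun i => psi (c i) x) P *
      Real.exp (-rpowSum c (fun i => (M i : ℝ)) x)) atTop (𝓝 (P.coeff M)) := by
  classical
  let E (m : ι →₀ ℕ) : ℝ → ℝ := rpowSum c fun i => (m i : ℝ)
  have hratio (m) (hm : m ∈ P.support) :
      Tendsto (fun x => Real.exp (E m x - E M x)) atTop (𝓝 (if m = M then 1 else 0)) := by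
    by_cases hmM : m = M
    · simp [hmM]
    · rw [if_neg hmM]
      exact Real.tendsto_exp_atBot.comp (hdom m hm hmM)
  have hterm (m) (hm : m ∈ P.support) : Tendsto (fun x => P.coeff m *
      (((∏ i, psi (c i) x ^ m i) * Real.exp (-E m x)) * Real.exp (E m x - E M x))) atTop
      (𝓝 (if m = M then P.coeff M else 0)) := by
    have := ((tendsto_prod_psi_pow_mul_exp_neg hc m).mul (hratio m hm)).const_mul (P.coeff m)
    split_ifs at this ⊢ with hmM <;> simpa [hmM] using this
  have hsum := tendsto_finsetSum P.support hterm
  rw [Finset.sum_ite_eq' P.support M, if_pos hM] at hsum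
  refine hsum.congr fun x => ?_
  rw [MvPolynomial.eval_eq', Finset.sum_mul]
  refine Finset.sum_congr rfl fun m _ => ?_
  rw [mul_assoc, mul_assoc, ← Real.exp_add, show -E m x + (E m x - E M x) = -E M x by ring]

end

theorem stmt_10 (p : ℕ) (c : Fin p → ℝ) (hc : ∀ i, 0 < c i)
    (hcinj : Function.Injective c)
    (P : MvPolynomial (Fin p) ℝ) (hP : P ≠ 0) (hP0 : MvPolynomial.coeff 0 P = 0) :
    Tendsto
      (fun x : ℝ => |MvPolynomial.eval
        (fun i => Real.exp (|x| ^ (c i)) - Real.exp (-(|x| ^ (c i)))) P|)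
      atTop atTop := by
  obtain ⟨M, hM, hdom⟩ := exists_dominant_exponent hc hcinj (MvPolynomial.support_nonempty.2 hP)
  have hcoeff : P.coeff M ≠ 0 := MvPolynomial.mem_support_iff.1 hM
  have hM0 : M ≠ 0 := by rintro rfl; exact hcoeff hP0
  have hgrowth := Real.tendsto_exp_atTop.comp
    (tendsto_rpowSum_natCast_atTop hc (mt Finsupp.coe_eq_zero.1 hM0))
  have hlim := (tendsto_eval_psi_mul_exp_neg hc hM hdom).abs
  refine (hgrowth.atTop_mul_pos (abs_pos.2 hcoeff) hlim).congr fun x => ?_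
  rw [Function.comp_apply, abs_mul, abs_of_pos (Real.exp_pos _), mul_left_comm, ← Real.exp_add,
    add_neg_cancel, Real.exp_zero, mul_one]
  rfl
end

section
/- For each s > 1, the sequence a_{n,s} = (ns)^{-n+(-1)^n} is absolutely summable, and for any nontrivial finite linear combination x_n = Σ_{j=1}^k α_j a_{n,s_j} with distinct s_j > 1 and not all α_j zero, one has liminf_{n→∞} |x_{n+1}/x_n| = 0 and limsup_{n→∞} |x_{n+1}/x_n| = ∞. -/
/-!
If `t = σ j₀` is the smallest `σ j` with `α j ≠ 0`, then `x n = a_{n,t} g n` with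
`g n → α j₀`, since `(σ / t) ^ (-n + (-1)^n) → 0` for `σ > t`. Hence `|x (n+1) / x n|` is
asymptotically `a_{n+1,t} / a_{n,t}`. For odd `n` this ratio is
`(n t)^(n+1) / ((n+1) t)^n ≥ n t / e`, while for even `n ≥ 2` it is
`(n t)^(n-1) / ((n+1) t)^(n+2) ≤ ((n+1) t)^(-3)`.
-/

open Filter

/-- The sequence `a n s = (n s)^{-n + (-1)^n}`. -/
noncomputable def seqA (n : ℕ) (s : ℝ) : ℝ :=
  ((n : ℝ) * s) ^ (-(n : ℤ) + (-1 : ℤ) ^ n)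

open Topology

lemma liminf_coe_eq_zero_of_tendsto_comp {ι α : Type*} {f : Filter ι} [f.NeBot] {g : Filter α}
    {u : α → ℝ} (hu : ∀ a, 0 ≤ u a) {v : ι → α} (hv : Tendsto v f g)
    (h : Tendsto (u ∘ v) f (𝓝 0)) : liminf (fun a => (u a : EReal)) g = 0 := by
  refine le_antisymm ?_ (le_liminf_of_le (by isBoundedDefault)
    (Eventually.of_forall fun a => EReal.coe_nonneg.2 (hu a)))
  calc liminf (fun a => (u a : EReal)) g ≤ liminf ((fun a => (u a : EReal)) ∘ v) f :=
        hv.liminf_le_liminf_comp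
    _ = 0 := (EReal.tendsto_coe.2 h).liminf_eq

lemma limsup_coe_eq_top_of_tendsto_comp {ι α : Type*} {f : Filter ι} [f.NeBot] {g : Filter α}
    {u : α → ℝ} {v : ι → α} (hv : Tendsto v f g) (h : Tendsto (u ∘ v) f atTop) :
    limsup (fun a => (u a : EReal)) g = ⊤ := by
  refine top_le_iff.1 ?_
  calc (⊤ : EReal) = limsup ((fun a => (u a : EReal)) ∘ v) f :=
        (EReal.tendsto_coe_atTop.comp h).limsup_eq.symm
    _ ≤ limsup (fun a => (u a : EReal)) g := hv.limsup_comp_le_limsup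

lemma neg_add_neg_one_pow_le (n : ℕ) : -(n : ℤ) + (-1) ^ n ≤ 1 - n := by
  rcases neg_one_pow_eq_or ℤ n with h | h <;> rw [h] <;> omega

lemma seqA_nonneg (n : ℕ) {s : ℝ} (hs : 0 ≤ s) : 0 ≤ seqA n s :=
  zpow_nonneg (by positivity) _

lemma seqA_of_odd {n : ℕ} (hn : Odd n) (s : ℝ) : seqA n s = (((n : ℝ) * s) ^ (n + 1))⁻¹ := by
  rw [seqA, hn.neg_one_pow, ← zpow_natCast, ← zpow_neg]
  push_cast
  ring_nf

lemma seqA_succ_of_odd {n : ℕ} (hn : Odd n) (s : ℝ) :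
    seqA (n + 1) s = ((((n : ℝ) + 1) * s) ^ n)⁻¹ := by
  rw [seqA, hn.add_one.neg_one_pow, ← zpow_natCast, ← zpow_neg]
  push_cast
  ring_nf

lemma seqA_eq_seqA_mul_zpow (n : ℕ) (s : ℝ) {t : ℝ} (ht : t ≠ 0) :
    seqA n s = seqA n t * (s / t) ^ (-(n : ℤ) + (-1) ^ n) := by
  rw [seqA, seqA, ← mul_zpow, mul_assoc, mul_div_cancel₀ _ ht]

lemma summable_abs_seqA_succ {s : ℝ} (hs : 1 < s) :
    Summable (fun n : ℕ => |seqA (n + 1) s|) := by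
  refine Summable.of_nonneg_of_le (fun n => abs_nonneg _) (fun n => ?_)
    (summable_geometric_of_lt_one (by positivity) (inv_lt_one_of_one_lt₀ hs))
  have hbase : s ≤ ((n + 1 : ℕ) : ℝ) * s := le_mul_of_one_le_left (by positivity) (by simp)
  have hexp : -((n + 1 : ℕ) : ℤ) + (-1) ^ (n + 1) ≤ -(n : ℤ) := by
    have := neg_add_neg_one_pow_le (n + 1); push_cast at this ⊢; omega
  rw [abs_of_nonneg (seqA_nonneg _ (by positivity)), seqA, inv_pow]
  calc (((n + 1 : ℕ) : ℝ) * s) ^ (-((n + 1 : ℕ) : ℤ) + (-1) ^ (n + 1))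
      ≤ (((n + 1 : ℕ) : ℝ) * s) ^ (-(n : ℤ)) := zpow_le_zpow_right₀ (hs.le.trans hbase) hexp
    _ = ((((n + 1 : ℕ) : ℝ) * s) ^ n)⁻¹ := by rw [zpow_neg, zpow_natCast]
    _ ≤ (s ^ n)⁻¹ := by gcongr

lemma seqA_succ_div_seqA_of_odd {n : ℕ} (hn : Odd n) (s : ℝ) :
    seqA (n + 1) s / seqA n s = ((n : ℝ) * s) ^ (n + 1) / (((n : ℝ) + 1) * s) ^ n := by
  rw [seqA_succ_of_odd hn, seqA_of_odd hn, inv_div_inv]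

lemma seqA_succ_succ_div_seqA_succ_of_odd {n : ℕ} (hn : Odd n) (s : ℝ) :
    seqA (n + 1 + 1) s / seqA (n + 1) s
      = (((n : ℝ) + 1) * s) ^ n / (((n : ℝ) + 2) * s) ^ (n + 3) := by
  rw [seqA_of_odd (by simpa [add_assoc] using hn.add_even even_two), seqA_succ_of_odd hn,
    inv_div_inv]
  push_cast
  ring_nf

lemma seqA_succ_succ_div_seqA_succ_le {n : ℕ} (hn : Odd n) {s : ℝ} (hs : 0 < s) :
    seqA (n + 1 + 1) s / seqA (n + 1) s ≤ ((((n : ℝ) + 2) * s) ^ 3)⁻¹ := by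
  set b := ((n : ℝ) + 2) * s
  have hb : 0 < b := by positivity
  calc seqA (n + 1 + 1) s / seqA (n + 1) s = (((n : ℝ) + 1) * s) ^ n / b ^ (n + 3) :=
        seqA_succ_succ_div_seqA_succ_of_odd hn s
    _ ≤ b ^ n / b ^ (n + 3) := by gcongr; linarith
    _ = (b ^ 3)⁻¹ := by field_simp; ring

lemma mul_div_exp_one_le_seqA_succ_div_seqA {n : ℕ} (hn : Odd n) {s : ℝ} (hs : 0 < s) :
    (n : ℝ) * s / Real.exp 1 ≤ seqA (n + 1) s / seqA n s := by
  have hn0 : (0 : ℝ) < n := by exact_mod_cast hn.pos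
  have hb : ((n : ℝ) + 1) * s = n * s * (1 + (n : ℝ)⁻¹) := by field_simp
  have hquot : ((n : ℝ) * s) ^ (n + 1) / ((n : ℝ) * s * (1 + (n : ℝ)⁻¹)) ^ n
      = n * s / (1 + (n : ℝ)⁻¹) ^ n := by
    rw [mul_pow ((n : ℝ) * s), pow_succ]
    field_simp
  rw [seqA_succ_div_seqA_of_odd hn, hb, hquot]
  gcongr
  exact Real.one_add_inv_pow_le_exp

lemma tendsto_two_mul_add_one_atTop : Tendsto (fun m : ℕ => 2 * m + 1) atTop atTop :=
  tendsto_atTop_mono (fun m => by dsimp only [id]; omega) tendsto_id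

lemma tendsto_seqA_succ_div_seqA_odd {s : ℝ} (hs : 0 < s) :
    Tendsto (fun m : ℕ => seqA (2 * m + 1 + 1) s / seqA (2 * m + 1) s) atTop atTop := by
  have hodd : Tendsto (fun m : ℕ => ((2 * m + 1 : ℕ) : ℝ)) atTop atTop :=
    tendsto_natCast_atTop_atTop.comp tendsto_two_mul_add_one_atTop
  exact tendsto_atTop_mono
    (fun m => mul_div_exp_one_le_seqA_succ_div_seqA (odd_two_mul_add_one m) hs)
    ((hodd.atTop_mul_const' hs).atTop_div_const (Real.exp_pos 1))

lemma tendsto_seqA_succ_div_seqA_even {s : ℝ} (hs : 0 < s) :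
    Tendsto (fun m : ℕ => seqA (2 * m + 1 + 1 + 1) s / seqA (2 * m + 1 + 1) s) atTop (𝓝 0) := by
  have hodd : Tendsto (fun m : ℕ => ((2 * m + 1 : ℕ) : ℝ)) atTop atTop :=
    tendsto_natCast_atTop_atTop.comp tendsto_two_mul_add_one_atTop
  refine squeeze_zero (fun m => div_nonneg (seqA_nonneg _ hs.le) (seqA_nonneg _ hs.le))
    (fun m => seqA_succ_succ_div_seqA_succ_le (odd_two_mul_add_one m) hs) ?_
  exact tendsto_inv_atTop_zero.comp ((tendsto_pow_atTop (by norm_num)).comp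
    ((tendsto_atTop_add_const_right _ 2 hodd).atTop_mul_const' hs))

lemma tendsto_zpow_neg_add_neg_one_pow {r : ℝ} (hr : 1 < r) :
    Tendsto (fun n : ℕ => r ^ (-(n : ℤ) + (-1) ^ n)) atTop (𝓝 0) := by
  have hr0 : 0 < r := one_pos.trans hr
  refine squeeze_zero (fun n => (zpow_pos hr0 _).le)
    (fun n => zpow_le_zpow_right₀ hr.le (neg_add_neg_one_pow_le n)) ?_
  have hgeom : Tendsto (fun n : ℕ => r * r⁻¹ ^ n) atTop (𝓝 0) := by
    simpa using (tendsto_pow_atTop_nhds_zero_of_lt_one (by positivity)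
      (inv_lt_one_of_one_lt₀ hr)).const_mul r
  refine hgeom.congr fun n => ?_
  rw [sub_eq_add_neg, zpow_add₀ hr0.ne', zpow_one, zpow_neg, zpow_natCast, inv_pow]

lemma exists_sum_seqA_eq_seqA_mul {ι : Type*} [Fintype ι] {σ : ι → ℝ} (hσ : ∀ j, 0 < σ j)
    (hσinj : Function.Injective σ) {α : ι → ℝ} (hα : α ≠ 0) :
    ∃ t > 0, ∃ c ≠ 0, ∃ g : ℕ → ℝ, Tendsto g atTop (𝓝 c) ∧
      ∀ n, ∑ j, α j * seqA n (σ j) = seqA n t * g n := by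
  classical
  obtain ⟨j₀, hj₀, hmin⟩ := Finset.exists_min_image {j | α j ≠ 0} σ
    (by simpa [Finset.Nonempty, funext_iff] using hα)
  rw [Finset.mem_filter] at hj₀
  have ht := hσ j₀
  refine ⟨σ j₀, ht, α j₀, hj₀.2,
    fun n => ∑ j, α j * (σ j / σ j₀) ^ (-(n : ℤ) + (-1) ^ n), ?_, fun n => ?_⟩
  · rw [show α j₀ = ∑ j, if j = j₀ then α j₀ else 0 by simp]
    refine tendsto_finsetSum _ fun j _ => ?_
    by_cases hj : j = j₀
    · subst hj
      simp [div_self ht.ne']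
    by_cases hαj : α j = 0
    · simp [hαj, hj]
    have hlt : σ j₀ < σ j :=
      (hmin j (by simp [hαj])).lt_of_ne fun h => hj (hσinj h).symm
    simpa [hj] using
      (tendsto_zpow_neg_add_neg_one_pow ((one_lt_div ht).2 hlt)).const_mul (α j)
  · rw [Finset.mul_sum]
    refine Finset.sum_congr rfl fun j _ => ?_
    rw [seqA_eq_seqA_mul_zpow n (σ j) ht.ne']
    ring

theorem liminf_limsup_abs_ratio_of_eq_seqA_mul {t c : ℝ} (ht : 0 < t) (hc : c ≠ 0) {g : ℕ → ℝ}
    (hg : Tendsto g atTop (𝓝 c)) {x : ℕ → ℝ} (hx : ∀ n, x n = seqA n t * g n) :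
    liminf (fun n : ℕ => (↑|x (n + 1) / x n| : EReal)) atTop = 0 ∧
      limsup (fun n : ℕ => (↑|x (n + 1) / x n| : EReal)) atTop = ⊤ := by
  have hq : Tendsto (fun n => |g (n + 1) / g n|) atTop (𝓝 1) := by
    simpa [div_self hc] using ((hg.comp (tendsto_add_atTop_nat 1)).div hg hc).abs
  have hratio : ∀ n, |x (n + 1) / x n| = seqA (n + 1) t / seqA n t * |g (n + 1) / g n| := by
    intro n
    rw [hx, hx, mul_div_mul_comm, abs_mul,
      abs_of_nonneg (div_nonneg (seqA_nonneg _ ht.le) (seqA_nonneg _ ht.le))]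
  have hodd := tendsto_two_mul_add_one_atTop
  have heven : Tendsto (fun m : ℕ => 2 * m + 1 + 1) atTop atTop :=
    tendsto_add_atTop_nat 1 |>.comp hodd
  constructor
  · refine liminf_coe_eq_zero_of_tendsto_comp (fun n => abs_nonneg _) heven ?_
    simpa [Function.comp_def, hratio] using
      (tendsto_seqA_succ_div_seqA_even ht).mul (hq.comp heven)
  · refine limsup_coe_eq_top_of_tendsto_comp hodd ?_
    simpa [Function.comp_def, hratio] using
      (tendsto_seqA_succ_div_seqA_odd ht).atTop_mul_pos one_pos (hq.comp hodd)

theorem stmt_11 (s : ℝ) (hs : 1 < s) (k : ℕ) (σ : Fin k → ℝ)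
    (hσ : ∀ j, 1 < σ j) (hσinj : Function.Injective σ)
    (α : Fin k → ℝ) (hα : α ≠ 0)
    (x : ℕ → ℝ) (hx : ∀ n, x n = ∑ j, α j * seqA n (σ j)) :
    Summable (fun n : ℕ => |seqA (n + 1) s|) ∧
      liminf (fun n : ℕ => (↑|x (n + 1) / x n| : EReal)) atTop = 0 ∧
      limsup (fun n : ℕ => (↑|x (n + 1) / x n| : EReal)) atTop = ⊤ := by
  obtain ⟨t, ht, c, hc, g, hg, hsum⟩ :=
    exists_sum_seqA_eq_seqA_mul (fun j => one_pos.trans (hσ j)) hσinj hα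
  exact ⟨summable_abs_seqA_succ hs,
    liminf_limsup_abs_ratio_of_eq_seqA_mul ht hc hg fun n => (hx n).trans (hsum n)⟩
end

section
/- Let (c_n) be a sequence of positive reals with Σ c_n divergent, and let c₀((c_n)) be the Banach space of real sequences (x_n) with x_n/c_n → 0, normed by ‖(x_n)‖ = sup_n |x_n/c_n|. Then the set of (x_n) ∈ c₀((c_n)) for which the series Σ x_n diverges is 𝔠-lineable: it contains, apart from 0, a vector subspace of dimension continuum. -/
/-!
Choose block boundaries `N 0 < N 1 < ⋯` such that the `k`-th block `[N k, N (k+1))` carries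
`c`-mass at least `k + 1`, and for `t ∈ (0, 1)` let `v_t` be `c` damped by `(k + 1)^{-t}` on the
`k`-th block. A nonzero combination `∑ aₜ vₜ` is `c · φ(k + 1)` on block `k`, where
`φ(u) = ∑ aₜ u^{-t}`. As `t > 0`, `φ(u) → 0`, so the combination lies in `c₀((c_n))`; as `t < 1`
and the exponents are distinct, `u |φ(u)| ≍ u^{1 - t₀} → ∞` for the least exponent `t₀`, so the
block sums, bounded below by `(k + 1) |φ(k + 1)|`, blow up and the series diverges. In particular
the `vₜ` are linearly independent, and there are continuum many of them.
-/

open Filter Topology Finset Real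

section RpowNegSum

variable {S : Set ℝ}

noncomputable def rpowNegSum (a : S →₀ ℝ) (u : ℝ) : ℝ :=
  ∑ t ∈ a.support, a t * u ^ (-(t : ℝ))

theorem tendsto_rpowNegSum_zero (hS : S ⊆ Set.Ioi 0) (a : S →₀ ℝ) :
    Tendsto (rpowNegSum a) atTop (𝓝 0) := by
  show Tendsto (fun u => ∑ t ∈ a.support, a t * u ^ (-(t : ℝ))) atTop (𝓝 0)
  simpa using tendsto_finsetSum a.support fun t _ =>
    (tendsto_rpow_neg_atTop (hS t.2)).const_mul (a t)

theorem tendsto_rpow_mul_rpowNegSum (a : S →₀ ℝ) {t₀ : S} (ht₀ : t₀ ∈ a.support)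
    (hmin : ∀ t ∈ a.support, t₀ ≤ t) :
    Tendsto (fun u => u ^ (t₀ : ℝ) * rpowNegSum a u) atTop (𝓝 (a t₀)) := by
  have hrest : Tendsto (fun u => ∑ t ∈ a.support.erase t₀, a t * u ^ (-((t : ℝ) - t₀)))
      atTop (𝓝 0) := by
    simpa using tendsto_finsetSum (a.support.erase t₀) fun t ht =>
      have hlt : (t₀ : ℝ) < t := lt_of_le_of_ne (hmin t (mem_of_mem_erase ht))
        fun h => ne_of_mem_erase ht (Subtype.ext h).symm
      (tendsto_rpow_neg_atTop (sub_pos.2 hlt)).const_mul (a t)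
  have hlim : Tendsto (fun u => a t₀ + ∑ t ∈ a.support.erase t₀, a t * u ^ (-((t : ℝ) - t₀)))
      atTop (𝓝 (a t₀)) := by
    simpa using tendsto_const_nhds.add hrest
  refine hlim.congr' ?_
  filter_upwards [eventually_gt_atTop 0] with u hu
  rw [rpowNegSum, ← add_sum_erase _ _ ht₀, mul_add, mul_sum, mul_left_comm,
    ← rpow_add hu, add_neg_cancel, rpow_zero, mul_one]
  congr 1
  refine sum_congr rfl fun t _ => ?_
  rw [mul_left_comm, ← rpow_add hu, neg_sub, sub_eq_add_neg]

theorem tendsto_mul_abs_rpowNegSum_atTop (hS : S ⊆ Set.Iio 1) {a : S →₀ ℝ} (ha : a ≠ 0) :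
    Tendsto (fun u => u * |rpowNegSum a u|) atTop atTop := by
  obtain ⟨t₀, ht₀, hmin⟩ :=
    a.support.exists_min_image id (Finsupp.support_nonempty_iff.2 ha)
  have hpow : Tendsto (fun u : ℝ => u ^ (1 - (t₀ : ℝ))) atTop atTop :=
    tendsto_rpow_atTop (sub_pos.2 (hS t₀.2))
  have hlim := (tendsto_rpow_mul_rpowNegSum a ht₀ hmin).abs
  refine (hpow.atTop_mul_pos (abs_pos.2 (Finsupp.mem_support_iff.1 ht₀)) hlim).congr' ?_
  filter_upwards [eventually_gt_atTop 0] with u hu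
  rw [abs_mul, abs_of_pos (rpow_pos_of_pos hu _), ← mul_assoc, ← rpow_add hu,
    sub_add_cancel, rpow_one]

end RpowNegSum

theorem exists_strictMono_le_sum_Ico {c : ℕ → ℝ} (hc : ∀ n, 0 ≤ c n) (hdiv : ¬Summable c)
    (b : ℕ → ℝ) : ∃ N : ℕ → ℕ, StrictMono N ∧ ∀ k, b k ≤ ∑ i ∈ Ico (N k) (N (k + 1)), c i := by
  have hS := (not_summable_iff_tendsto_nat_atTop_of_nonneg hc).1 hdiv
  have step : ∀ k m, ∃ n, m < n ∧ b k ≤ ∑ i ∈ Ico m n, c i := by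
    intro k m
    obtain ⟨n, hn, hmn⟩ := ((hS.eventually_ge_atTop (∑ i ∈ range m, c i + b k)).and
      (eventually_gt_atTop m)).exists
    exact ⟨n, hmn, by rw [sum_Ico_eq_sub _ hmn.le]; linarith⟩
  choose next hnext using step
  let N : ℕ → ℕ := fun k => Nat.rec 0 next k
  exact ⟨N, strictMono_nat_of_lt_succ fun k => (hnext k (N k)).1, fun k => (hnext k (N k)).2⟩

theorem not_tendsto_sum_range_of_tendsto_norm_sum_Ico {E : Type*} [SeminormedAddCommGroup E]
    {x : ℕ → E} {N : ℕ → ℕ} (hN : StrictMono N)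
    (h : Tendsto (fun k => ‖∑ i ∈ Ico (N k) (N (k + 1)), x i‖) atTop atTop) :
    ¬∃ l, Tendsto (fun n => ∑ i ∈ range n, x i) atTop (𝓝 l) := by
  rintro ⟨l, hl⟩
  have hlN := hl.comp hN.tendsto_atTop
  have hdiff : Tendsto (fun k => ∑ i ∈ range (N (k + 1)), x i - ∑ i ∈ range (N k), x i)
      atTop (𝓝 0) := by
    simpa using (hlN.comp (tendsto_add_atTop_nat 1)).sub hlN
  have hblocks : Tendsto (fun k => ∑ i ∈ Ico (N k) (N (k + 1)), x i) atTop (𝓝 0) :=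
    hdiff.congr fun k => (sum_Ico_eq_sub x (hN.monotone k.le_succ)).symm
  exact not_tendsto_atTop_of_tendsto_nhds (by simpa using hblocks.norm) h

section Blocks

variable {N : ℕ → ℕ}

/-- The index `k` of the block `[N k, N (k + 1))` containing `j` (for `j < N 0` it is `0`). -/
noncomputable def blockIndex (N : ℕ → ℕ) (j : ℕ) : ℕ :=
  Nat.findGreatest (fun k => N k ≤ j) j

theorem blockIndex_eq (hN : StrictMono N) {j k : ℕ} (hj : j ∈ Ico (N k) (N (k + 1))) :
    blockIndex N j = k := by
  rw [mem_Ico] at hj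
  rw [blockIndex, Nat.findGreatest_eq_iff]
  exact ⟨(hN.id_le k).trans hj.1, fun _ => hj.1,
    fun m hkm _ => not_le.2 (hj.2.trans_le (hN.monotone hkm))⟩

theorem tendsto_blockIndex (hN : StrictMono N) : Tendsto (blockIndex N) atTop atTop :=
  tendsto_atTop_atTop_of_monotone
    (fun _ _ hij => Nat.findGreatest_mono (fun _ h => h.trans hij) hij)
    fun k => ⟨N k, Nat.le_findGreatest (hN.id_le k) le_rfl⟩

noncomputable def blockFamily (c : ℕ → ℝ) (N : ℕ → ℕ) (t : ℝ) (j : ℕ) : ℝ :=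
  c j * ((blockIndex N j : ℝ) + 1) ^ (-t)

variable {c : ℕ → ℝ} {S : Set ℝ}

theorem linearCombination_blockFamily_apply (a : S →₀ ℝ) (j : ℕ) :
    Finsupp.linearCombination ℝ (fun t : S => blockFamily c N t) a j =
      c j * rpowNegSum a (blockIndex N j + 1) := by
  simp only [Finsupp.linearCombination_apply, Finsupp.sum, Finset.sum_apply, Pi.smul_apply,
    smul_eq_mul, blockFamily, rpowNegSum, mul_sum, mul_left_comm]

theorem tendsto_linearCombination_blockFamily_div (hc : ∀ n, c n ≠ 0) (hN : StrictMono N)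
    (hS : S ⊆ Set.Ioi 0) (a : S →₀ ℝ) :
    Tendsto (fun j => Finsupp.linearCombination ℝ (fun t : S => blockFamily c N t) a j / c j)
      atTop (𝓝 0) := by
  have hu : Tendsto (fun j => (blockIndex N j : ℝ) + 1) atTop atTop :=
    tendsto_atTop_add_const_right _ 1 (tendsto_natCast_atTop_atTop.comp (tendsto_blockIndex hN))
  refine ((tendsto_rpowNegSum_zero hS a).comp hu).congr fun j => ?_
  rw [linearCombination_blockFamily_apply, mul_div_cancel_left₀ _ (hc j), Function.comp_apply]

theorem not_tendsto_sum_linearCombination_blockFamily (hN : StrictMono N)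
    (hblock : ∀ k : ℕ, (k : ℝ) + 1 ≤ ∑ i ∈ Ico (N k) (N (k + 1)), c i)
    (hS : S ⊆ Set.Iio 1) {a : S →₀ ℝ} (ha : a ≠ 0) :
    ¬∃ l, Tendsto (fun n => ∑ i ∈ range n,
      Finsupp.linearCombination ℝ (fun t : S => blockFamily c N t) a i) atTop (𝓝 l) := by
  refine not_tendsto_sum_range_of_tendsto_norm_sum_Ico hN ?_
  have hsum : ∀ k : ℕ, ∑ i ∈ Ico (N k) (N (k + 1)),
      Finsupp.linearCombination ℝ (fun t : S => blockFamily c N t) a i =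
        (∑ i ∈ Ico (N k) (N (k + 1)), c i) * rpowNegSum a (k + 1) := by
    intro k
    rw [sum_mul]
    refine sum_congr rfl fun i hi => ?_
    rw [linearCombination_blockFamily_apply, blockIndex_eq hN hi]
  have hk : Tendsto (fun k : ℕ => ((k : ℝ) + 1) * |rpowNegSum a (k + 1)|) atTop atTop :=
    (tendsto_mul_abs_rpowNegSum_atTop hS ha).comp
      (tendsto_atTop_add_const_right _ 1 tendsto_natCast_atTop_atTop)
  refine tendsto_atTop_mono (fun k => ?_) hk
  rw [hsum, Real.norm_eq_abs, abs_mul]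
  exact mul_le_mul_of_nonneg_right ((hblock k).trans (le_abs_self _)) (abs_nonneg _)

theorem linearIndependent_blockFamily (hN : StrictMono N)
    (hblock : ∀ k : ℕ, (k : ℝ) + 1 ≤ ∑ i ∈ Ico (N k) (N (k + 1)), c i) (hS : S ⊆ Set.Iio 1) :
    LinearIndependent ℝ (fun t : S => blockFamily c N t) := by
  rw [linearIndependent_iff]
  intro a h0
  by_contra ha
  exact not_tendsto_sum_linearCombination_blockFamily hN hblock hS ha ⟨0, by simp [h0]⟩

end Blocks


theorem stmt_15 (c : ℕ → ℝ) (hc : ∀ n, 0 < c n) (hdiv : ¬ Summable c) :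
    ∃ M : Submodule ℝ (ℕ → ℝ), Module.rank ℝ M = Cardinal.continuum ∧
      ∀ x ∈ M, Tendsto (fun n => x n / c n) atTop (nhds 0) ∧
        (x ≠ 0 →
          ¬ ∃ l : ℝ, Tendsto (fun N => ∑ i ∈ Finset.range N, x i) atTop (nhds l)) := by
  obtain ⟨N, hN, hblock⟩ :=
    exists_strictMono_le_sum_Ico (fun n => (hc n).le) hdiv fun k => (k : ℝ) + 1
  let v : Set.Ioo (0 : ℝ) 1 → ℕ → ℝ := fun t => blockFamily c N t
  have hli : LinearIndependent ℝ v :=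
    linearIndependent_blockFamily hN hblock fun t ht => ht.2
  refine ⟨LinearMap.range (Finsupp.linearCombination ℝ v), ?_, ?_⟩
  · rw [rank_range_of_injective _ hli, rank_finsupp_self', Cardinal.mk_Ioo_real zero_lt_one]
  · rintro _ ⟨a, rfl⟩
    refine ⟨tendsto_linearCombination_blockFamily_div (fun n => (hc n).ne') hN
      (fun t ht => ht.1) a, fun hx => ?_⟩
    refine not_tendsto_sum_linearCombination_blockFamily hN hblock (fun t ht => ht.2) ?_
    rintro rfl
    exact hx (map_zero _)
end

section
/- Let (c_n) be positive reals with Σ c_n = ∞. Then the set A = {(x_n) ∈ c₀((c_n)) : Σ x_n diverges} is residual (comeager) in the Banach space c₀((c_n)). -/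
open Filter

theorem stmt_16 (c : ℕ → ℝ) (hc : ∀ n, 0 < c n) (hdiv : ¬ Summable c)
    (X : Type) [MetricSpace X]
    (e : X ≃ {x : ℕ → ℝ // Tendsto (fun n => x n / c n) atTop (nhds 0)})
    (hdist : ∀ x y : X, dist x y = ⨆ n : ℕ, |(e x).1 n - (e y).1 n| / c n) :
    {x : X | ¬ ∃ l : ℝ,
        Tendsto (fun N => ∑ i ∈ Finset.range N, (e x).1 i) atTop (nhds l)}
      ∈ residual X := by
  -- each coordinate is Lipschitz
  have hcoord : ∀ (x y : X) (i : ℕ), |(e x).1 i - (e y).1 i| ≤ c i * dist x y := by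
    intro x y i
    have htend : Tendsto (fun n => |(e x).1 n - (e y).1 n| / c n) atTop (nhds 0) := by
      have h := ((e x).2.sub (e y).2).abs
      have heq : (fun n => |(e x).1 n / c n - (e y).1 n / c n|)
          = fun n => |(e x).1 n - (e y).1 n| / c n := by
        funext n
        rw [div_sub_div_same, abs_div, abs_of_pos (hc n)]
      rw [heq] at h
      simpa using h
    have hbdd : BddAbove (Set.range fun n => |(e x).1 n - (e y).1 n| / c n) :=
      htend.bddAbove_range
    have h1 : |(e x).1 i - (e y).1 i| / c i ≤ dist x y := by
      rw [hdist]; exact le_ciSup hbdd i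
    calc |(e x).1 i - (e y).1 i|
        = c i * (|(e x).1 i - (e y).1 i| / c i) := by
          rw [mul_comm, div_mul_cancel₀ _ (hc i).ne']
      _ ≤ c i * dist x y := by
          exact mul_le_mul_of_nonneg_left h1 (hc i).le
  have hconti : ∀ i : ℕ, Continuous fun x : X => (e x).1 i := by
    intro i
    rw [Metric.continuous_iff]
    intro x ε hε
    refine ⟨ε / c i, div_pos hε (hc i), fun y hy => ?_⟩
    rw [Real.dist_eq]
    calc |(e y).1 i - (e x).1 i| ≤ c i * dist y x := hcoord y x i
      _ < c i * (ε / c i) := by exact mul_lt_mul_of_pos_left hy (hc i)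
      _ = ε := by rw [mul_comm, div_mul_cancel₀ ε (hc i).ne']
  -- the open dense sets
  set U : ℕ → Set X := fun N =>
    {x : X | ∃ n m : ℕ, N ≤ n ∧ n < m ∧ 1 < |∑ i ∈ Finset.Ico n m, (e x).1 i|} with hU
  have hUopen : ∀ N, IsOpen (U N) := by
    intro N
    have : U N = ⋃ (n : ℕ) (m : ℕ) (_ : N ≤ n) (_ : n < m),
        {x : X | 1 < |∑ i ∈ Finset.Ico n m, (e x).1 i|} := by
      ext x
      simp only [hU, Set.mem_setOf_eq, Set.mem_iUnion]
      tauto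
    rw [this]
    refine isOpen_iUnion fun n => isOpen_iUnion fun m =>
      isOpen_iUnion fun _ => isOpen_iUnion fun _ => ?_
    have hcont : Continuous fun x : X => |∑ i ∈ Finset.Ico n m, (e x).1 i| :=
      (continuous_finset_sum _ fun i _ => hconti i).abs
    exact isOpen_lt continuous_const hcont
  -- divergence of partial sums of c
  have hC : Tendsto (fun m => ∑ i ∈ Finset.range m, c i) atTop atTop := by
    rw [← not_summable_iff_tendsto_nat_atTop_of_nonneg (fun i => (hc i).le)]
    exact hdiv
  have hUdense : ∀ N, Dense (U N) := by
    intro N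
    rw [Metric.dense_iff]
    intro x ε hε
    -- choose n beyond which coordinates are small
    have hx := (e x).2
    rw [Metric.tendsto_atTop] at hx
    obtain ⟨n1, hn1⟩ := hx (ε / 4) (by positivity)
    set n := max N n1 with hn
    -- choose m far enough
    obtain ⟨m, hm1, hm2⟩ :=
      ((hC.eventually_gt_atTop (∑ i ∈ Finset.range n, c i + 4 / ε)).and
        (eventually_gt_atTop n)).exists
    have hsmall : ∀ i, n ≤ i → |(e x).1 i| / c i < ε / 4 := by
      intro i hi
      have := hn1 i (le_trans (le_max_right N n1) hi)
      rw [Real.dist_eq, sub_zero, abs_div, abs_of_pos (hc i)] at this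
      exact this
    -- the perturbed sequence
    set z : ℕ → ℝ := fun i => if n ≤ i ∧ i < m then (ε / 4) * c i else (e x).1 i with hzdef
    have hz : Tendsto (fun i => z i / c i) atTop (nhds 0) := by
      refine (e x).2.congr' ?_
      filter_upwards [eventually_ge_atTop m] with i hi
      have : ¬ (n ≤ i ∧ i < m) := fun h => absurd h.2 (not_lt.2 hi)
      simp [hzdef, this]
    set y : X := e.symm ⟨z, hz⟩ with hy
    have hey : (e y).1 = z := by rw [hy, Equiv.apply_symm_apply]
    have hdyx : dist y x < ε := by
      rw [hdist]
      have hle : ∀ i : ℕ, |(e y).1 i - (e x).1 i| / c i ≤ ε / 2 := by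
        intro i
        rw [hey]
        by_cases hi : n ≤ i ∧ i < m
        · have hzi : z i = (ε / 4) * c i := by rw [hzdef]; simp [hi.1, hi.2]
          have h1 : |z i - (e x).1 i| ≤ (ε / 4) * c i + |(e x).1 i| := by
            calc |z i - (e x).1 i| ≤ |z i| + |(e x).1 i| := abs_sub _ _
              _ = (ε / 4) * c i + |(e x).1 i| := by
                  rw [hzi, abs_of_nonneg (mul_nonneg (by positivity) (hc i).le)]
          have h2 : |(e x).1 i| / c i < ε / 4 := hsmall i hi.1
          calc |z i - (e x).1 i| / c i
              ≤ ((ε / 4) * c i + |(e x).1 i|) / c i :=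
                div_le_div_of_nonneg_right h1 (hc i).le
            _ = ε / 4 + |(e x).1 i| / c i := by
                rw [add_div, mul_div_assoc, div_self (hc i).ne', mul_one]
            _ ≤ ε / 2 := by linarith
        · have : z i = (e x).1 i := by rw [hzdef]; simp [hi]
          rw [this]
          simp only [sub_self, abs_zero, zero_div]
          positivity
      calc (⨆ i : ℕ, |(e y).1 i - (e x).1 i| / c i) ≤ ε / 2 := ciSup_le hle
        _ < ε := by linarith
    refine ⟨y, Metric.mem_ball.2 hdyx, ?_⟩
    refine ⟨n, m, le_max_left N n1, hm2, ?_⟩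
    have hsum : ∑ i ∈ Finset.Ico n m, (e y).1 i = (ε / 4) * ∑ i ∈ Finset.Ico n m, c i := by
      rw [hey, Finset.mul_sum]
      refine Finset.sum_congr rfl fun i hi => ?_
      rw [Finset.mem_Ico] at hi
      rw [hzdef]; simp [hi.1, hi.2]
    rw [hsum]
    have hpos : (0:ℝ) < ∑ i ∈ Finset.Ico n m, c i :=
      Finset.sum_pos (fun i _ => hc i) (Finset.nonempty_Ico.2 hm2)
    rw [abs_of_pos (by positivity)]
    have hIco : ∑ i ∈ Finset.Ico n m, c i
        = ∑ i ∈ Finset.range m, c i - ∑ i ∈ Finset.range n, c i := by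
      rw [Finset.sum_Ico_eq_sub _ hm2.le]
    have h4 : 4 / ε < ∑ i ∈ Finset.Ico n m, c i := by rw [hIco]; linarith
    calc (1:ℝ) = (ε / 4) * (4 / ε) := by field_simp
      _ < (ε / 4) * ∑ i ∈ Finset.Ico n m, c i :=
          mul_lt_mul_of_pos_left h4 (by positivity)
  -- the intersection is contained in the target set
  have hsub : (⋂ N, U N) ⊆ {x : X | ¬ ∃ l : ℝ,
      Tendsto (fun N => ∑ i ∈ Finset.range N, (e x).1 i) atTop (nhds l)} := by
    intro x hx
    rintro ⟨l, hl⟩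
    have hcauchy : CauchySeq (fun N => ∑ i ∈ Finset.range N, (e x).1 i) := hl.cauchySeq
    rw [Metric.cauchySeq_iff] at hcauchy
    obtain ⟨N, hN⟩ := hcauchy 1 one_pos
    obtain ⟨n, m, hNn, hnm, h1⟩ := Set.mem_iInter.1 hx N
    have hd := hN m (le_trans hNn (le_trans hnm.le (le_refl m))) n hNn
    rw [Real.dist_eq, ← Finset.sum_Ico_eq_sub _ hnm.le] at hd
    linarith
  have hres : ∀ N, U N ∈ residual X := fun N =>
    residual_of_dense_open (hUopen N) (hUdense N)
  exact mem_of_superset ((countable_iInter_mem).2 hres) hsub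
end

section
/- The translated-dilated typewriter sequences are linearly independent: if 0 < t₁ < t₂ < ⋯ < t_s < 1/2 and c₁,…,c_s ∈ ℝ satisfy c₁ T_{n,t₁} + ⋯ + c_s T_{n,t_s} = 0 almost everywhere for all n (where T_{n,t}(x) = T_n(2(x - t)) and T_n is the typewriter sequence extended by 0 outside [0,1]), then c₁ = ⋯ = c_s = 0. -/
open Filter MeasureTheory

theorem stmt_18 (T : ℕ → ℝ → ℝ)
    (hT : ∀ k j : ℕ, j < 2 ^ k →
      T (2 ^ k + j) =
        Set.indicator (Set.Icc ((j : ℝ) / 2 ^ k) (((j : ℝ) + 1) / 2 ^ k))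
          (fun _ => (1 : ℝ)))
    (s : ℕ) (hs : 1 ≤ s) (t : Fin s → ℝ)
    (ht0 : ∀ i, 0 < t i) (ht1 : ∀ i, t i < 1 / 2) (htmono : StrictMono t)
    (c : Fin s → ℝ)
    (hrel : ∀ n : ℕ, 1 ≤ n → ∀ᵐ x : ℝ, ∑ i, c i * T n (2 * (x - t i)) = 0) :
    ∀ i, c i = 0 := by
  have hT1 : T 1 = Set.indicator (Set.Icc (0:ℝ) 1) (fun _ => (1:ℝ)) := by
    have h := hT 0 0 (by norm_num)
    norm_num at h
    exact h
  have key : ∀ k : Fin s, ∑ i ∈ Finset.Iic k, c i = 0 := by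
    intro k
    set u : ℝ := if h : (k:ℕ) + 1 < s then t ⟨(k:ℕ)+1, h⟩ else 1/2 with hu
    have hu2 : u ≤ 1/2 := by
      rw [hu]
      split
      · exact le_of_lt (ht1 _)
      · exact le_rfl
    have htu : t k < u := by
      rw [hu]
      split
      · exact htmono (by simp [Fin.lt_def])
      · exact ht1 k
    obtain ⟨x, hx, hxeq⟩ : ∃ x ∈ Set.Ioo (t k) u,
        ∑ i, c i * T 1 (2 * (x - t i)) = 0 := by
      have hae := hrel 1 le_rfl
      rw [MeasureTheory.ae_iff] at hae
      by_contra hcon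
      push_neg at hcon
      have hsub : Set.Ioo (t k) u ⊆
          {x | ¬ ∑ i, c i * T 1 (2 * (x - t i)) = 0} := fun x hx => hcon x hx
      have h0 := measure_mono_null hsub hae
      rw [Real.volume_Ioo] at h0
      have : u - t k ≤ 0 := by
        by_contra hlt
        push_neg at hlt
        exact (ENNReal.ofReal_pos.mpr hlt).ne' h0
      linarith
    have hval : ∀ i : Fin s,
        c i * Set.indicator (Set.Icc (0:ℝ) 1) (fun _ => (1:ℝ)) (2 * (x - t i))
          = if i ≤ k then c i else 0 := by
      intro i
      by_cases hik : i ≤ k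
      · rw [if_pos hik, Set.indicator_of_mem, mul_one]
        constructor
        · have h1 : t i ≤ t k := htmono.monotone hik
          have := hx.1
          linarith
        · have h0 := ht0 i
          have := hx.2
          linarith
      · rw [if_neg hik, Set.indicator_of_notMem, mul_zero]
        push_neg at hik
        have hk1 : (k:ℕ) + 1 < s := lt_of_le_of_lt (Nat.succ_le_of_lt hik) i.isLt
        have huk : u = t ⟨(k:ℕ)+1, hk1⟩ := by rw [hu, dif_pos hk1]
        have hti : u ≤ t i := by
          rw [huk]
          exact htmono.monotone (by exact Nat.succ_le_of_lt hik)
        intro hmem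
        have h1 := hmem.1
        have h2 := hx.2
        linarith
    rw [show Finset.Iic k = Finset.univ.filter (fun i => i ≤ k) from by
      ext i; simp]
    rw [hT1] at hxeq
    rw [Finset.sum_filter]
    rw [Finset.sum_congr rfl (fun i _ => (hval i).symm)]
    exact hxeq
  suffices H : ∀ m : ℕ, ∀ i : Fin s, (i:ℕ) = m → c i = 0 by
    exact fun i => H i i rfl
  intro m
  induction m using Nat.strong_induction_on with
  | _ m ih =>
    intro i him
    have h1 := key i
    rw [← Finset.Iio_insert, Finset.sum_insert (by simp)] at h1
    have h2 : ∑ j ∈ Finset.Iio i, c j = 0 := by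
      refine Finset.sum_eq_zero (fun j hj => ?_)
      have hji : (j : ℕ) < (i : ℕ) := by have h := Finset.mem_Iio.mp hj; exact h
      exact ih j (him ▸ hji) j rfl
    linarith
end

section
/- The family of sequences (f_n) of Lebesgue measurable functions on [0,1] such that f_n → 0 in measure but (f_n(x)) fails to converge for all x in some set of positive measure is 𝔠-lineable in (L⁰[0,1])^ℕ: there is a vector space of dimension continuum of such sequences (apart from the zero sequence). -/
/-!
Let `T n` be the typewriter sequence on `[0, 1)` and `V t n x = T n (2 (x - t))` for
`0 < t < 1/2`, a copy of it living on `[t, t + 1/2)`. The supports of `T n`, hence of every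
`V t n`, have measure tending to `0`, and this property passes to finite linear combinations, so
every `F` in their span tends to `0` in measure. If `F = ∑ c_t V_t ≠ 0`, let `j` be the largest
shift with `c_j ≠ 0`. Just to the left of `j + 1/2` every other `V_t` vanishes, so there
`F n x = c_j T n (2 (x - j))`, which takes both values `c_j` and `0` infinitely often and therefore
diverges. In particular no nontrivial combination vanishes: the `V_t` are linearly independent and
span a space of dimension `#(0, 1/2) = 𝔠`.
-/

open Filter MeasureTheory Function Set Topology

lemma not_tendsto_of_frequently_eq {α X : Type*} [TopologicalSpace X] [T1Space X] {f : Filter α}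
    {u : α → X} {a b : X} (hab : a ≠ b) (ha : ∃ᶠ n in f, u n = a) (hb : ∃ᶠ n in f, u n = b)
    (l : X) : ¬ Tendsto u f (𝓝 l) := fun h =>
  hab <| (isClosed_singleton.mem_of_frequently_of_tendsto ha h).symm.trans
    (isClosed_singleton.mem_of_frequently_of_tendsto hb h)

section SequenceSubmodules

variable {α : Type*} [MeasurableSpace α]

def measurableSeqs : Submodule ℝ (ℕ → α → ℝ) where
  carrier := {F | ∀ n, Measurable (F n)}
  add_mem' hF hG n := (hF n).add (hG n)
  zero_mem' _ := measurable_const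
  smul_mem' c _ hF n := (hF n).const_smul c

variable (R : Type*) {M : Type*} [Semiring R] [AddCommMonoid M] [Module R M]

def supportNullSeqs (μ : Measure α) : Submodule R (ℕ → α → M) where
  carrier := {F | Tendsto (fun n => μ (support (F n))) atTop (𝓝 0)}
  add_mem' {F G} hF hG := by
    refine tendsto_of_tendsto_of_tendsto_of_le_of_le tendsto_const_nhds
      (by simpa using hF.add hG) (fun _ => zero_le) fun n => ?_
    exact (measure_mono (support_add (F n) (G n))).trans (measure_union_le _ _)
  zero_mem' := by simp
  smul_mem' c F hF :=
    tendsto_of_tendsto_of_tendsto_of_le_of_le tendsto_const_nhds hF (fun _ => zero_le)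
      fun n => measure_mono (support_smul_subset_right (fun _ => c) (F n))

end SequenceSubmodules

noncomputable section

def dyadicInterval (k j : ℕ) : Set ℝ := Ico (j / 2 ^ k) ((j + 1) / 2 ^ k)

lemma mem_dyadicInterval_iff {k j : ℕ} {y : ℝ} :
    y ∈ dyadicInterval k j ↔ 0 ≤ y ∧ ⌊y * 2 ^ k⌋₊ = j := by
  have h2k : (0 : ℝ) < 2 ^ k := by positivity
  simp only [dyadicInterval, mem_Ico, div_le_iff₀ h2k, lt_div_iff₀ h2k]
  constructor
  · rintro ⟨hl, hr⟩
    have hy : 0 ≤ y := nonneg_of_mul_nonneg_left ((Nat.cast_nonneg j).trans hl) h2k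
    exact ⟨hy, (Nat.floor_eq_iff (by positivity)).2 ⟨hl, hr⟩⟩
  · rintro ⟨hy, rfl⟩
    exact (Nat.floor_eq_iff (by positivity)).1 rfl

lemma dyadicInterval_subset_Ico {k j : ℕ} (hj : j < 2 ^ k) : dyadicInterval k j ⊆ Ico 0 1 := by
  have h2k : (0 : ℝ) < 2 ^ k := by positivity
  have hj' : (j : ℝ) + 1 ≤ 2 ^ k := by exact_mod_cast hj
  rintro y ⟨hl, hr⟩
  refine ⟨(div_nonneg (Nat.cast_nonneg j) h2k.le).trans hl, hr.trans_le ?_⟩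
  rwa [div_le_one h2k]

lemma volume_dyadicInterval (k j : ℕ) :
    volume (dyadicInterval k j) = ENNReal.ofReal ((2 : ℝ) ^ k)⁻¹ := by
  rw [dyadicInterval, Real.volume_Ico]
  congr 1
  ring

lemma sub_two_pow_log_lt (n : ℕ) : n - 2 ^ Nat.log 2 n < 2 ^ Nat.log 2 n := by
  have := Nat.lt_pow_succ_log_self one_lt_two n
  rw [pow_succ] at this
  omega

/-- Writing `n = 2 ^ k + j` with `j < 2 ^ k`, the `n`-th typewriter function is the indicator of
`[j / 2 ^ k, (j + 1) / 2 ^ k)`. -/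
def typewriter (n : ℕ) : ℝ → ℝ :=
  (dyadicInterval (Nat.log 2 n) (n - 2 ^ Nat.log 2 n)).indicator 1

lemma typewriter_two_pow_add {k j : ℕ} (hj : j < 2 ^ k) :
    typewriter (2 ^ k + j) = (dyadicInterval k j).indicator 1 := by
  have hlog : Nat.log 2 (2 ^ k + j) = k :=
    Nat.log_eq_of_pow_le_of_lt_pow (Nat.le_add_right _ _) (by rw [pow_succ]; omega)
  rw [typewriter, hlog, Nat.add_sub_cancel_left]

lemma measurable_typewriter (n : ℕ) : Measurable (typewriter n) :=
  measurable_const.indicator measurableSet_Ico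

lemma support_typewriter_subset (n : ℕ) : support (typewriter n) ⊆ Ico 0 1 :=
  support_indicator_subset.trans (dyadicInterval_subset_Ico (sub_two_pow_log_lt n))

lemma tendsto_volume_support_typewriter :
    Tendsto (fun n => volume (support (typewriter n))) atTop (𝓝 0) := by
  have hlog : Tendsto (Nat.log 2) atTop atTop :=
    tendsto_atTop_atTop_of_monotone (fun _ _ => Nat.log_mono_right)
      fun k => ⟨2 ^ k, (Nat.log_pow one_lt_two k).ge⟩
  have hwidth : Tendsto (fun k : ℕ => ENNReal.ofReal ((2 : ℝ) ^ k)⁻¹) atTop (𝓝 0) := by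
    simpa using ENNReal.tendsto_ofReal
      (tendsto_inv_atTop_zero.comp (tendsto_pow_atTop_atTop_of_one_lt one_lt_two))
  refine tendsto_of_tendsto_of_tendsto_of_le_of_le tendsto_const_nhds (hwidth.comp hlog)
    (fun _ => zero_le) fun n => ?_
  rw [comp_apply, ← volume_dyadicInterval _ (n - 2 ^ Nat.log 2 n)]
  exact measure_mono support_indicator_subset

lemma frequently_typewriter_eq_one {y : ℝ} (hy : y ∈ Ico 0 1) :
    ∃ᶠ n in atTop, typewriter n y = 1 := by
  refine frequently_atTop.2 fun N => ⟨2 ^ N + ⌊y * 2 ^ N⌋₊, ?_, ?_⟩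
  · exact Nat.lt_two_pow_self.le.trans (Nat.le_add_right _ _)
  · have hj : ⌊y * 2 ^ N⌋₊ < 2 ^ N := by
      rw [Nat.floor_lt (by have := hy.1; positivity)]
      push_cast
      nlinarith [hy.2, pow_pos (two_pos : (0 : ℝ) < 2) N]
    rw [typewriter_two_pow_add hj, indicator_of_mem (mem_dyadicInterval_iff.2 ⟨hy.1, rfl⟩)]
    rfl

/-- At level `k ≥ 1` there are at least two dyadic intervals, and `y` lies in at most one. -/
lemma frequently_typewriter_eq_zero (y : ℝ) : ∃ᶠ n in atTop, typewriter n y = 0 := by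
  refine frequently_atTop.2 fun N => ?_
  set j := if ⌊y * 2 ^ (N + 1)⌋₊ = 0 then 1 else 0
  have hj : j < 2 ^ (N + 1) := by
    have : 2 ≤ 2 ^ (N + 1) := Nat.le_self_pow N.succ_ne_zero 2
    unfold j; split_ifs <;> omega
  refine ⟨2 ^ (N + 1) + j, by have := @Nat.lt_two_pow_self (N + 1); omega, ?_⟩
  rw [typewriter_two_pow_add hj]
  refine indicator_of_notMem (fun hy => ?_) _
  have := (mem_dyadicInterval_iff.1 hy).2
  unfold j at this
  split_ifs at this <;> omega

lemma not_tendsto_const_mul_typewriter {c y : ℝ} (hc : c ≠ 0) (hy : y ∈ Ico 0 1) (l : ℝ) :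
    ¬ Tendsto (fun n => c * typewriter n y) atTop (𝓝 l) :=
  not_tendsto_of_frequently_eq (a := c) (b := 0) hc
    ((frequently_typewriter_eq_one hy).mono fun n hn => by rw [hn, mul_one])
    ((frequently_typewriter_eq_zero y).mono fun n hn => by rw [hn, mul_zero]) l

def shiftedTypewriter (t : ℝ) (n : ℕ) (x : ℝ) : ℝ := typewriter n (2 * (x - t))

abbrev shiftedTypewriters (t : Ioo (0 : ℝ) 2⁻¹) : ℕ → ℝ → ℝ := shiftedTypewriter t

lemma measurable_shiftedTypewriter (t : ℝ) (n : ℕ) : Measurable (shiftedTypewriter t n) :=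
  (measurable_typewriter n).comp ((measurable_id.sub_const t).const_mul 2)

lemma shiftedTypewriter_eq_zero_of_le {t x : ℝ} (h : t + 2⁻¹ ≤ x) (n : ℕ) :
    shiftedTypewriter t n x = 0 :=
  notMem_support.1 fun hx => (support_typewriter_subset n hx).2.not_ge (by linarith)

lemma volume_support_shiftedTypewriter (t : ℝ) (n : ℕ) :
    volume (support (shiftedTypewriter t n)) =
      ENNReal.ofReal 2⁻¹ * volume (support (typewriter n)) := by
  have hpre : support (shiftedTypewriter t n) =
      (· + -t) ⁻¹' ((fun x => 2 * x) ⁻¹' support (typewriter n)) := by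
    ext x; simp [shiftedTypewriter, sub_eq_add_neg]
  rw [hpre, measure_preimage_add_right, Real.volume_preimage_mul_left two_ne_zero,
    abs_of_pos (by norm_num)]

lemma shiftedTypewriter_mem_supportNullSeqs (t : ℝ) :
    shiftedTypewriter t ∈ supportNullSeqs ℝ volume := by
  have := ENNReal.Tendsto.const_mul (a := ENNReal.ofReal 2⁻¹) tendsto_volume_support_typewriter
    (Or.inr ENNReal.ofReal_ne_top)
  simpa [supportNullSeqs, volume_support_shiftedTypewriter] using this

lemma linearCombination_shiftedTypewriters_apply (c : Ioo (0 : ℝ) 2⁻¹ →₀ ℝ) (n : ℕ)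
    (x : ℝ) :
    Finsupp.linearCombination ℝ shiftedTypewriters c n x =
      ∑ i ∈ c.support, c i * shiftedTypewriter i n x := by
  simp [Finsupp.linearCombination_apply, Finsupp.sum, Finset.sum_apply]

lemma linearCombination_shiftedTypewriters_eq_of_le (c : Ioo (0 : ℝ) 2⁻¹ →₀ ℝ)
    {j : Ioo (0 : ℝ) 2⁻¹} (hj : j ∈ c.support) {b : ℝ}
    (hb : ∀ i ∈ c.support, i ≠ j → (i : ℝ) < b) {x : ℝ} (hx : b + 2⁻¹ ≤ x) (n : ℕ) :
    Finsupp.linearCombination ℝ shiftedTypewriters c n x = c j * shiftedTypewriter j n x := by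
  rw [linearCombination_shiftedTypewriters_apply]
  refine Finset.sum_eq_single_of_mem j hj fun i hi hij => ?_
  rw [shiftedTypewriter_eq_zero_of_le (by linarith [hb i hi hij]), mul_zero]

theorem exists_not_tendsto_linearCombination_shiftedTypewriters
    (c : Ioo (0 : ℝ) 2⁻¹ →₀ ℝ) (hc : c ≠ 0) :
    ∃ S ⊆ Icc (0 : ℝ) 1, 0 < volume S ∧ ∀ x ∈ S, ¬ ∃ l : ℝ,
      Tendsto (fun n => Finsupp.linearCombination ℝ shiftedTypewriters c n x) atTop (𝓝 l) := by
  obtain ⟨j, hj, hmax⟩ :=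
    c.support.exists_max_image (fun i => (i : ℝ)) (Finsupp.support_nonempty_iff.2 hc)
  have hlt : ∀ i ∈ c.support, i ≠ j → (i : ℝ) < j := fun i hi hij =>
    (hmax i hi).lt_of_ne (Subtype.coe_injective.ne hij)
  have hgap : ∀ᶠ b in 𝓝[<] (j : ℝ),
      (j : ℝ) - 2⁻¹ < b ∧ ∀ i ∈ c.support, i ≠ j → (i : ℝ) < b :=
    eventually_nhdsWithin_of_eventually_nhds <|
      (eventually_gt_nhds (by linarith)).and <| (eventually_all_finset _).2 fun i hi =>
        eventually_imp_distrib_left.2 fun hij => eventually_gt_nhds (hlt i hi hij)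
  obtain ⟨b, ⟨hb_gt, hb⟩, hb_lt⟩ := (hgap.and self_mem_nhdsWithin).exists
  obtain ⟨hj0, hj1⟩ := j.2
  refine ⟨Ioo (b + 2⁻¹) (j + 2⁻¹), fun x hx => ⟨by linarith [hx.1], by linarith [hx.2]⟩, ?_,
    fun x hx ⟨l, hl⟩ => ?_⟩
  · rw [Real.volume_Ioo, ENNReal.ofReal_pos]
    linarith
  · simp_rw [linearCombination_shiftedTypewriters_eq_of_le c hj hb hx.1.le] at hl
    exact not_tendsto_const_mul_typewriter (Finsupp.mem_support_iff.1 hj)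
      ⟨by linarith [hx.1], by linarith [hx.2]⟩ l hl

theorem linearIndependent_shiftedTypewriters :
    LinearIndependent ℝ shiftedTypewriters := by
  refine linearIndependent_iff.2 fun c hc => by_contra fun hne => ?_
  obtain ⟨S, -, hS, hdiv⟩ := exists_not_tendsto_linearCombination_shiftedTypewriters c hne
  obtain ⟨x, hx⟩ := nonempty_of_measure_ne_zero hS.ne'
  exact hdiv x hx ⟨0, by simp [hc]⟩

end

theorem stmt_19 :
    ∃ M : Submodule ℝ (ℕ → ℝ → ℝ), Module.rank ℝ M = Cardinal.continuum ∧
      ∀ F ∈ M,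
        (∀ n : ℕ, Measurable (F n)) ∧
        (∀ α : ℝ, 0 < α →
          Tendsto (fun n : ℕ => volume {x : ℝ | x ∈ Set.Icc (0 : ℝ) 1 ∧ α < |F n x|})
            atTop (nhds 0)) ∧
        (F ≠ 0 → ∃ S : Set ℝ, S ⊆ Set.Icc (0 : ℝ) 1 ∧ 0 < volume S ∧
          ∀ x ∈ S, ¬ ∃ l : ℝ, Tendsto (fun n : ℕ => F n x) atTop (nhds l)) := by
  refine ⟨Submodule.span ℝ (range shiftedTypewriters), ?_, fun F hF => ?_⟩
  · rw [rank_span linearIndependent_shiftedTypewriters,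
      Cardinal.mk_range_eq _ linearIndependent_shiftedTypewriters.injective]
    exact Cardinal.mk_Ioo_real (by norm_num)
  have mem_of_span {p : Submodule ℝ (ℕ → ℝ → ℝ)}
      (hp : ∀ t, shiftedTypewriters t ∈ p) : F ∈ p :=
    Submodule.span_le.2 (range_subset_iff.2 hp) hF
  refine ⟨mem_of_span (p := measurableSeqs) fun t => measurable_shiftedTypewriter t,
    fun α hα => ?_, fun hF0 => ?_⟩
  · have hnull : F ∈ supportNullSeqs ℝ volume :=
      mem_of_span fun t => shiftedTypewriter_mem_supportNullSeqs t
    refine tendsto_of_tendsto_of_tendsto_of_le_of_le tendsto_const_nhds hnull (fun _ => zero_le)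
      fun n => measure_mono fun x hx => ?_
    exact mem_support.2 fun h => lt_asymm hα (hx.2.trans_le (by rw [h, abs_zero]))
  · obtain ⟨c, rfl⟩ := Finsupp.mem_span_range_iff_exists_finsupp.1 hF
    rw [← Finsupp.linearCombination_apply] at hF0 ⊢
    exact exists_not_tendsto_linearCombination_shiftedTypewriters c (by rintro rfl; simp at hF0)
end
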